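/- arXiv:2401.03380 — 6 statements merged into one kernel-verified Lean document; each statement's English description precedes it below -/
import Mathlib

section
/- For all positive integers m1, m2, the Mordell–Tornheim value T(1,1;1) = ∑_{m1,m2≥1} 1/(m1·m2·(m1+m2)) equals 2ζ(3). -/
open Finset Filter

def eN : ℕ ≃ ℕ+ := ⟨Nat.succPNat, PNat.natPred, Nat.natPred_succPNat, PNat.succPNat_natPred⟩

noncomputable def H (n : ℕ) : ℝ := ∑ i ∈ Finset.range n, 1/((i:ℝ)+1)

lemma H_succ (n : ℕ) : H (n+1) = H n + 1/((n:ℝ)+1) := Finset.sum_range_succ _ n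

lemma sum_shift (u : ℕ → ℝ) (n M : ℕ) :
    ∑ m ∈ range M, (u m - u (m+n)) = ∑ j ∈ range n, u j - ∑ j ∈ range n, u (M+j) := by
  have h1 : ∑ m ∈ range M, u (m+n) = ∑ i ∈ range (n+M), u i - ∑ j ∈ range n, u j := by
    rw [Finset.sum_range_add u n M]
    have : ∑ x ∈ range M, u (n + x) = ∑ x ∈ range M, u (x + n) :=
      Finset.sum_congr rfl (fun i _ => by rw [Nat.add_comm])
    rw [this]; ring
  have h2 : ∑ i ∈ range (n+M), u i = ∑ i ∈ range M, u i + ∑ j ∈ range n, u (M+j) := by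
    rw [Nat.add_comm n M, Finset.sum_range_add u M n]
  rw [Finset.sum_sub_distrib, h1, h2]; ring

lemma hsq : Summable (fun m : ℕ => 1/((m:ℝ)+1)^2) := by
  have := (summable_nat_add_iff 1).mpr (Real.summable_one_div_nat_pow.mpr (by norm_num : 1 < 2))
  exact this.congr (fun m => by push_cast; ring)

lemma hcube : Summable (fun m : ℕ => 1/((m:ℝ)+1)^3) := by
  have := (summable_nat_add_iff 1).mpr (Real.summable_one_div_nat_pow.mpr (by norm_num : 1 < 3))
  exact this.congr (fun m => by push_cast; ring)

lemma rpow_three_half (x : ℝ) (hx : 0 ≤ x) : x ^ ((3:ℝ)/2) = x * Real.sqrt x := by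
  rcases eq_or_lt_of_le hx with h | h
  · rw [← h]; simp [Real.zero_rpow (by norm_num : (3:ℝ)/2 ≠ 0)]
  · rw [Real.sqrt_eq_rpow]
    nth_rewrite 2 [← Real.rpow_one x]
    rw [← Real.rpow_add h]
    norm_num

lemma sqrt_mul_le (m n : ℝ) (hm : 0 ≤ m) (hn : 0 ≤ n) : Real.sqrt (m*n) ≤ m + n := by
  have h := Real.sqrt_le_sqrt (by nlinarith : m*n ≤ (m+n)^2)
  rwa [Real.sqrt_sq (by linarith)] at h

lemma summable_a : Summable (fun n : ℕ+ => ((n:ℝ) * Real.sqrt n)⁻¹) := by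
  have h := Real.summable_nat_rpow_inv.mpr (by norm_num : (1:ℝ) < 3/2)
  have h2 : Summable (fun n : ℕ => ((n:ℝ) * Real.sqrt n)⁻¹) :=
    h.congr (fun n => by rw [rpow_three_half _ (Nat.cast_nonneg n)])
  exact h2.comp_injective PNat.coe_injective

lemma pnat_cast_pos (m : ℕ+) : (0:ℝ) < (m:ℝ) := by exact_mod_cast m.pos

lemma key_bound (m n : ℕ+) :
    (m:ℝ) * n * Real.sqrt ((m:ℝ) * n) ≤ (m:ℝ) * n * ((m:ℝ) + n) := by
  have hm := pnat_cast_pos m; have hn := pnat_cast_pos n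
  have h := sqrt_mul_le (m:ℝ) (n:ℝ) hm.le hn.le
  exact mul_le_mul_of_nonneg_left h (by positivity)

lemma summable_T : Summable (fun p : ℕ+ × ℕ+ => 1 / ((p.1:ℝ) * (p.2:ℝ) * ((p.1:ℝ) + (p.2:ℝ)))) := by
  have hprod := (summable_a.mul_of_nonneg summable_a
    (fun n => by positivity) (fun n => by positivity) :
    Summable fun p : ℕ+ × ℕ+ => ((p.1:ℝ) * Real.sqrt p.1)⁻¹ * ((p.2:ℝ) * Real.sqrt p.2)⁻¹)
  refine Summable.of_nonneg_of_le (fun p => by positivity) (fun p => ?_) hprod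
  obtain ⟨m, n⟩ := p
  have hm := pnat_cast_pos m; have hn := pnat_cast_pos n
  have h1 : ((m:ℝ) * Real.sqrt m)⁻¹ * ((n:ℝ) * Real.sqrt n)⁻¹
      = 1 / ((m:ℝ) * n * Real.sqrt ((m:ℝ)*n)) := by
    rw [Real.sqrt_mul hm.le]; field_simp
  rw [h1]
  apply one_div_le_one_div_of_le
  · have := Real.sqrt_pos.mpr (by positivity : (0:ℝ) < (m:ℝ)*n); positivity
  · exact key_bound m n

lemma summable_S : Summable (fun p : ℕ+ × ℕ+ => 1 / ((p.1:ℝ) * ((p.1:ℝ) + (p.2:ℝ))^2)) := by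
  have hprod := (summable_a.mul_of_nonneg summable_a
    (fun n => by positivity) (fun n => by positivity) :
    Summable fun p : ℕ+ × ℕ+ => ((p.1:ℝ) * Real.sqrt p.1)⁻¹ * ((p.2:ℝ) * Real.sqrt p.2)⁻¹)
  refine Summable.of_nonneg_of_le (fun p => by positivity) (fun p => ?_) hprod
  obtain ⟨m, n⟩ := p
  have hm := pnat_cast_pos m; have hn := pnat_cast_pos n
  have h1 : ((m:ℝ) * Real.sqrt m)⁻¹ * ((n:ℝ) * Real.sqrt n)⁻¹
      = 1 / ((m:ℝ) * n * Real.sqrt ((m:ℝ)*n)) := by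
    rw [Real.sqrt_mul hm.le]; field_simp
  rw [h1]
  apply one_div_le_one_div_of_le
  · have := Real.sqrt_pos.mpr (by positivity : (0:ℝ) < (m:ℝ)*n); positivity
  · have h2 := key_bound m n
    simp only
    nlinarith [h2, pow_pos hm 3, mul_pos (mul_pos hm hm) hn]

lemma row (k : ℕ+) : HasSum (fun j : ℕ+ => 1 / ((k:ℝ) * (j:ℝ) * ((k:ℝ) + (j:ℝ)))) (H k / (k:ℝ)^2) := by
  have hk := pnat_cast_pos k
  set F : ℕ → ℝ := fun m => 1/((k:ℝ)*((m:ℝ)+1)*((k:ℝ)+((m:ℝ)+1))) with hF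
  have hcomp : (fun j : ℕ+ => 1 / ((k:ℝ) * (j:ℝ) * ((k:ℝ) + (j:ℝ)))) ∘ eN = F := by
    funext m; simp [eN, hF]
  rw [← Equiv.hasSum_iff eN, hcomp]
  have hFsum : Summable F := by
    refine Summable.of_nonneg_of_le (fun m => by positivity) (fun m => ?_) hsq
    apply one_div_le_one_div_of_le (by positivity)
    have h1 : (1:ℝ) ≤ (k:ℝ) := by exact_mod_cast k.one_le
    have hx : (0:ℝ) < (m:ℝ)+1 := by positivity
    have hk2 : (1:ℝ) ≤ (k:ℝ)*(k:ℝ) := by nlinarith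
    have A := mul_nonneg (mul_nonneg hx.le hx.le) (sub_nonneg.mpr h1)
    have B := mul_nonneg hx.le (sub_nonneg.mpr hk2)
    nlinarith [A, B, hx]
  rw [hFsum.hasSum_iff_tendsto_nat]
  set u : ℕ → ℝ := fun j => 1/((j:ℝ)+1) with hu
  have hterm : ∀ m : ℕ, F m = (1/(k:ℝ)^2) * (u m - u (m + (k:ℕ))) := by
    intro m
    simp only [hF, hu]
    push_cast
    rw [div_sub_div _ _ (by positivity) (by positivity)]
    rw [div_mul_div_comm]
    rw [div_eq_div_iff (by positivity) (by positivity)]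
    ring
  have hpartial : ∀ M : ℕ, ∑ m ∈ range M, F m
      = (1/(k:ℝ)^2) * (H k - ∑ j ∈ range (k:ℕ), u (M + j)) := by
    intro M
    simp only [hterm]
    rw [← Finset.mul_sum, sum_shift u (k:ℕ) M]
    rfl
  simp only [hpartial]
  have h0 : Tendsto (fun M : ℕ => ∑ j ∈ range (k:ℕ), u (M + j)) atTop (nhds 0) := by
    have : Tendsto (fun M : ℕ => ∑ j ∈ range (k:ℕ), u (M + j)) atTop
        (nhds (∑ j ∈ range (k:ℕ), (0:ℝ))) := by
      apply tendsto_finset_sum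
      intro j _
      have := (tendsto_one_div_add_atTop_nhds_zero_nat (𝕜 := ℝ)).comp
        (tendsto_add_atTop_nat j)
      apply this.congr
      intro M
      simp only [hu, Function.comp_apply]
      try push_cast
      try ring
    simpa using this
  have := (tendsto_const_nhds (x := H (k:ℕ)) (f := atTop (α := ℕ))).sub h0
  have := (tendsto_const_nhds (x := 1/(k:ℝ)^2) (f := atTop (α := ℕ))).mul this
  simpa [div_eq_mul_inv, mul_comm] using this

def e2 : (Σ n : ℕ, Fin (n+1)) ≃ ℕ × ℕ where
  toFun σ := ((σ.2 : ℕ), σ.1 - σ.2)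
  invFun p := ⟨p.1 + p.2, ⟨p.1, by omega⟩⟩
  left_inv := by
    rintro ⟨n, i⟩
    have h : (i:ℕ) ≤ n := Nat.lt_succ_iff.mp i.isLt
    show (⟨(i:ℕ) + (n - (i:ℕ)), ⟨(i:ℕ), by omega⟩⟩ : Σ n : ℕ, Fin (n+1)) = ⟨n, i⟩
    refine Sigma.ext ?_ ?_
    · show (i:ℕ) + (n - (i:ℕ)) = n
      omega
    · refine (Fin.heq_ext_iff ?_).mpr rfl
      show (i:ℕ) + (n - (i:ℕ)) + 1 = n + 1
      omega
  right_inv := by rintro ⟨a, b⟩; simp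

noncomputable def G : ℕ × ℕ → ℝ := fun p => 1/(((p.1:ℝ)+1) * (((p.1:ℝ)+(p.2:ℝ))+2)^2)

lemma G_comp (p : ℕ × ℕ) :
    (fun q : ℕ+ × ℕ+ => 1/((q.1:ℝ) * ((q.1:ℝ)+(q.2:ℝ))^2)) ((eN.prodCongr eN) p) = G p := by
  obtain ⟨a, b⟩ := p
  simp only [eN, G, Equiv.prodCongr_apply, Equiv.coe_fn_mk, Prod.map_apply, Nat.succPNat_coe]
  push_cast
  ring_nf

lemma summable_G : Summable G :=
  ((eN.prodCongr eN).summable_iff.mpr summable_S).congr G_comp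

lemma sigma_val (n : ℕ) : ∑ i : Fin (n+1), G (e2 ⟨n, i⟩) = H (n+1) / ((n:ℝ)+2)^2 := by
  have hval : ∀ i : Fin (n+1), G (e2 ⟨n, i⟩) = (1/(((i:ℕ):ℝ)+1)) * (1/((n:ℝ)+2)^2) := by
    intro i
    have h : (i:ℕ) ≤ n := Nat.lt_succ_iff.mp i.isLt
    have hc : ((n - (i:ℕ) : ℕ) : ℝ) = (n:ℝ) - (i:ℕ) := by
      rw [Nat.cast_sub h]
    simp only [e2, G, Equiv.coe_fn_mk, hc]
    rw [div_mul_div_comm]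
    congr 1
    · ring
    · congr 1; ring
  rw [Finset.sum_congr rfl (fun i _ => hval i), ← Finset.sum_mul]
  rw [Fin.sum_univ_eq_sum_range (fun i => 1/((i:ℝ)+1)) (n+1)]
  rw [H]; ring

lemma summable_d : Summable (fun n : ℕ => H (n+1) / ((n:ℝ)+2)^2) := by
  have hs : Summable (fun σ : Σ n : ℕ, Fin (n+1) => G (e2 σ)) :=
    e2.summable_iff.mpr summable_G
  refine hs.sigma.congr (fun n => ?_)
  rw [tsum_fintype]; exact sigma_val n

lemma S_eq : (∑' p : ℕ+ × ℕ+, 1/((p.1:ℝ) * ((p.1:ℝ)+(p.2:ℝ))^2))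
    = ∑' n : ℕ, H (n+1) / ((n:ℝ)+2)^2 := by
  have hsg : Summable (fun σ : Σ n : ℕ, Fin (n+1) => G (e2 σ)) :=
    e2.summable_iff.mpr summable_G
  rw [← (eN.prodCongr eN).tsum_eq, tsum_congr G_comp, ← e2.tsum_eq, Summable.tsum_sigma hsg]
  exact tsum_congr fun n => by rw [tsum_fintype]; exact sigma_val n

lemma T_eq : (∑' p : ℕ+ × ℕ+, 1 / ((p.1 : ℝ) * (p.2 : ℝ) * ((p.1 : ℝ) + (p.2 : ℝ))))
    = ∑' n : ℕ, H (n+1) / ((n:ℝ)+1)^2 := by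
  rw [Summable.tsum_prod summable_T]
  have h1 : (fun m : ℕ+ => ∑' n : ℕ+, 1 / ((m : ℝ) * (n : ℝ) * ((m : ℝ) + (n : ℝ))))
      = fun m : ℕ+ => H m / (m:ℝ)^2 := funext fun m => (row m).tsum_eq
  rw [show (fun m : ℕ+ => ∑' n : ℕ+, 1 / (((m,n).1 : ℝ) * ((m,n).2 : ℝ) * (((m,n).1 : ℝ) + ((m,n).2 : ℝ)))) = fun m : ℕ+ => H m / (m:ℝ)^2 from h1]
  rw [← eN.tsum_eq (fun m : ℕ+ => H (m:ℕ) / ((m:ℕ):ℝ)^2)]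
  exact tsum_congr fun n => by simp [eN]

lemma keyt (n : ℕ) : H (n+2) / ((n:ℝ)+2)^2 = H (n+1) / ((n:ℝ)+2)^2 + 1/((n:ℝ)+2)^3 := by
  have : H (n+2) = H (n+1) + 1/((n:ℝ)+2) := by
    rw [H_succ (n+1)]; push_cast; ring
  rw [this]
  have h2 : ((n:ℝ)+2) ≠ 0 := by positivity
  field_simp

lemma hq : Summable (fun n : ℕ => 1/((n:ℝ)+2)^3) := by
  have := (summable_nat_add_iff 1).mpr hcube
  exact this.congr fun n => by push_cast; ring

/-- The Mordell–Tornheim value `T(1,1;1) = ∑_{m1,m2 ≥ 1} 1/(m1 m2 (m1+m2))`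
equals `2 ζ(3)`. -/
theorem stmt_0 :
    (∑' m : ℕ+ × ℕ+, 1 / ((m.1 : ℝ) * (m.2 : ℝ) * ((m.1 : ℝ) + (m.2 : ℝ))))
      = 2 * ∑' n : ℕ+, 1 / (n : ℝ) ^ 3 := by
  have hZ1 : (∑' n : ℕ+, 1 / (n : ℝ) ^ 3) = ∑' n : ℕ, 1/((n:ℝ)+1)^3 := by
    rw [← eN.tsum_eq (fun n : ℕ+ => 1 / (n : ℝ) ^ 3)]
    exact tsum_congr fun n => by simp [eN]
  have hZ2 : (∑' n : ℕ, 1/((n:ℝ)+1)^3) = 1 + ∑' n : ℕ, 1/((n:ℝ)+2)^3 := by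
    rw [Summable.tsum_eq_zero_add hcube]
    congr 1
    · norm_num
    · exact tsum_congr fun n => by push_cast; ring
  -- T = S + Z
  have hshift : Summable (fun n : ℕ => H (n+1+1) / (((n+1:ℕ):ℝ)+1)^2) := by
    refine (summable_d.add hq).congr fun n => ?_
    push_cast
    rw [show (n:ℝ)+1+1 = (n:ℝ)+2 by ring]
    exact (keyt n).symm
  have ht : Summable (fun n : ℕ => H (n+1) / ((n:ℝ)+1)^2) :=
    (summable_nat_add_iff 1).mp hshift
  have key2 : (∑' m : ℕ+ × ℕ+, 1 / ((m.1 : ℝ) * (m.2 : ℝ) * ((m.1 : ℝ) + (m.2 : ℝ))))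
      = (∑' p : ℕ+ × ℕ+, 1/((p.1:ℝ) * ((p.1:ℝ)+(p.2:ℝ))^2)) + ∑' n : ℕ+, 1 / (n : ℝ) ^ 3 := by
    rw [T_eq, Summable.tsum_eq_zero_add ht, S_eq, hZ1, hZ2]
    have h0 : H (0+1) / (((0:ℕ):ℝ)+1)^2 = 1 := by simp [H]
    rw [h0]
    have hsum : (∑' n : ℕ, H (n+1+1) / ((((n+1:ℕ)):ℝ)+1)^2)
        = (∑' n : ℕ, H (n+1) / ((n:ℝ)+2)^2) + ∑' n : ℕ, 1/((n:ℝ)+2)^3 := by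
      rw [← Summable.tsum_add summable_d hq]
      refine tsum_congr fun n => ?_
      push_cast
      rw [show (n:ℝ)+1+1 = (n:ℝ)+2 by ring]
      exact keyt n
    rw [hsum]
    ring
  -- T = 2 S
  have hsplit : ∀ p : ℕ+ × ℕ+, 1 / ((p.1 : ℝ) * (p.2 : ℝ) * ((p.1 : ℝ) + (p.2 : ℝ)))
      = 1/((p.1:ℝ) * ((p.1:ℝ)+(p.2:ℝ))^2) + 1/((p.2:ℝ) * ((p.1:ℝ)+(p.2:ℝ))^2) := by
    rintro ⟨m, n⟩
    have hm := pnat_cast_pos m; have hn := pnat_cast_pos n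
    simp only
    rw [div_add_div _ _ (by positivity) (by positivity), div_eq_div_iff (by positivity) (by positivity)]
    ring
  have hgswap : Summable (fun p : ℕ+ × ℕ+ => 1/((p.2:ℝ) * ((p.1:ℝ)+(p.2:ℝ))^2)) := by
    refine summable_S.prod_symm.congr fun p => ?_
    simp only [Prod.fst_swap, Prod.snd_swap]
    ring_nf
  have hswap_eq : (∑' p : ℕ+ × ℕ+, 1/((p.2:ℝ) * ((p.1:ℝ)+(p.2:ℝ))^2))
      = ∑' p : ℕ+ × ℕ+, 1/((p.1:ℝ) * ((p.1:ℝ)+(p.2:ℝ))^2) := by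
    rw [← (Equiv.prodComm ℕ+ ℕ+).tsum_eq (fun p : ℕ+ × ℕ+ => 1/((p.1:ℝ) * ((p.1:ℝ)+(p.2:ℝ))^2))]
    exact tsum_congr fun p => by simp [Equiv.prodComm]; ring_nf
  have key1 : (∑' m : ℕ+ × ℕ+, 1 / ((m.1 : ℝ) * (m.2 : ℝ) * ((m.1 : ℝ) + (m.2 : ℝ))))
      = 2 * ∑' p : ℕ+ × ℕ+, 1/((p.1:ℝ) * ((p.1:ℝ)+(p.2:ℝ))^2) := by
    rw [tsum_congr hsplit, Summable.tsum_add summable_S hgswap, hswap_eq]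
    ring
  linarith [key1, key2]
end

section
/- The alternating Mordell–Tornheim value T(\bar1,1;1) = ∑_{m1,m2≥1} (-1)^{m1}/(m1·m2·(m1+m2)) equals -(5/8)ζ(3). -/
open Finset Filter Topology

/-- Harmonic numbers. -/
noncomputable def Hn (n : ℕ) : ℝ := ∑ i ∈ Finset.range n, 1 / (i + 1 : ℝ)

lemma Hn_zero : Hn 0 = 0 := by simp [Hn]

lemma Hn_succ (n : ℕ) : Hn (n + 1) = Hn n + 1 / (n + 1 : ℝ) := by
  simp [Hn, Finset.sum_range_succ]

/-- The base positive Mordell–Tornheim summand. -/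
noncomputable def F (p : ℕ × ℕ) : ℝ := 1 / ((p.1 : ℝ) * p.2 * ((p.1 : ℝ) + p.2))

lemma F_nonneg (p : ℕ × ℕ) : 0 ≤ F p := by
  unfold F; positivity

lemma F_le (p : ℕ × ℕ) :
    F p ≤ (1 / (p.1 : ℝ) ^ (3/2 : ℝ)) * (1 / (p.2 : ℝ) ^ (3/2 : ℝ)) := by
  obtain ⟨m, n⟩ := p
  rcases Nat.eq_zero_or_pos m with hm | hm
  · subst hm; simp [F, Real.zero_rpow (by norm_num : (3/2 : ℝ) ≠ 0)]
  rcases Nat.eq_zero_or_pos n with hn | hn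
  · subst hn; simp [F, Real.zero_rpow (by norm_num : (3/2 : ℝ) ≠ 0)]
  have hm' : (0:ℝ) < m := by exact_mod_cast hm
  have hn' : (0:ℝ) < n := by exact_mod_cast hn
  have hrw : ∀ x : ℝ, 0 < x → x ^ (3/2 : ℝ) = x * Real.sqrt x := by
    intro x hx
    rw [Real.sqrt_eq_rpow, show (3/2 : ℝ) = 1 + 1/2 by norm_num, Real.rpow_add hx,
      Real.rpow_one]
  rw [hrw _ hm', hrw _ hn', one_div_mul_one_div]
  unfold F
  rw [div_le_div_iff₀ (by positivity) (by positivity)]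
  have hsq : Real.sqrt (↑m) * Real.sqrt (↑n) ≤ (m : ℝ) + n := by
    rw [← Real.sqrt_mul hm'.le]
    calc Real.sqrt ((m:ℝ) * n) ≤ Real.sqrt (((m:ℝ) + n)^2) := by
          apply Real.sqrt_le_sqrt; nlinarith
      _ = (m:ℝ) + n := Real.sqrt_sq (by positivity)
  have h0 : (0:ℝ) ≤ Real.sqrt ↑m * Real.sqrt ↑n := by positivity
  calc (1:ℝ) * ((m:ℝ) * Real.sqrt ↑m * ((n:ℝ) * Real.sqrt ↑n))
      = ((m:ℝ) * n) * (Real.sqrt ↑m * Real.sqrt ↑n) := by ring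
    _ ≤ ((m:ℝ) * n) * ((m:ℝ) + n) := by
        apply mul_le_mul_of_nonneg_left hsq (by positivity)
    _ = 1 * ((m:ℝ) * ↑n * (↑m + ↑n)) := by ring


set_option maxHeartbeats 1000000 in
lemma summable_F : Summable F := by
  have h32 : Summable (fun n : ℕ => 1 / (n : ℝ) ^ (3/2 : ℝ)) :=
    Real.summable_one_div_nat_rpow.mpr (by norm_num)
  have hb : Summable (fun p : ℕ × ℕ =>
      (1 / (p.1 : ℝ) ^ (3/2 : ℝ)) * (1 / (p.2 : ℝ) ^ (3/2 : ℝ))) :=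
    Summable.mul_of_nonneg h32 h32 (by intro n; positivity) (by intro n; positivity)
  exact Summable.of_nonneg_of_le F_nonneg F_le hb

lemma summable_wF (w : ℕ × ℕ → ℝ) (hw : ∀ p, |w p| ≤ 1) :
    Summable (fun p => w p * F p) := by
  apply Summable.of_norm_bounded summable_F
  intro p
  rw [Real.norm_eq_abs, abs_mul, abs_of_nonneg (F_nonneg p)]
  calc |w p| * F p ≤ 1 * F p := mul_le_mul_of_nonneg_right (hw p) (F_nonneg p)
    _ = F p := one_mul _

lemma Hn_add (N m : ℕ) : Hn (N + m) = Hn N + ∑ i ∈ Finset.range m, 1 / ((N : ℝ) + i + 1) := by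
  induction m with
  | zero => simp
  | succ m ih =>
    rw [← Nat.add_assoc, Hn_succ, ih, Finset.sum_range_succ]
    push_cast
    ring

lemma tendsto_Hn_diff (m : ℕ) :
    Tendsto (fun N : ℕ => Hn (N + m) - Hn N) atTop (𝓝 0) := by
  have : ∀ N : ℕ, Hn (N + m) - Hn N = ∑ i ∈ Finset.range m, 1 / ((N : ℝ) + i + 1) := by
    intro N; rw [Hn_add]; ring
  simp_rw [this]
  have h0 : (0:ℝ) = ∑ i ∈ Finset.range m, (0:ℝ) := by simp
  rw [h0]
  apply tendsto_finset_sum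
  intro i _
  apply squeeze_zero (fun N => by positivity)
    (g := fun N : ℕ => 1 / ((N : ℝ) + 1))
  · intro N
    apply one_div_le_one_div_of_le (by positivity)
    have : (0:ℝ) ≤ i := by positivity
    linarith
  · exact tendsto_one_div_add_atTop_nhds_zero_nat


lemma sum_range_inner (m : ℕ) (hm : 1 ≤ m) (N : ℕ) :
    ∑ j ∈ Finset.range N, F (m, j + 1)
      = (1 / (m:ℝ)^2) * (Hn m - (Hn (N + m) - Hn N)) := by
  have hm' : (0:ℝ) < m := by exact_mod_cast hm
  induction N with
  | zero => simp [Hn_zero]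
  | succ N ih =>
    rw [Finset.sum_range_succ, ih]
    have e1 : N + 1 + m = (N + m) + 1 := by omega
    rw [e1, Hn_succ, Hn_succ]
    unfold F
    have hN : (0:ℝ) < (N:ℝ) + 1 := by positivity
    have hNm : (0:ℝ) < (N:ℝ) + m + 1 := by positivity
    push_cast
    field_simp
    ring

lemma inner_hasSum (m : ℕ) (hm : 1 ≤ m) :
    HasSum (fun n : ℕ => F (m, n)) (Hn m / (m:ℝ)^2) := by
  have hm' : (0:ℝ) < m := by exact_mod_cast hm
  rw [hasSum_iff_tendsto_nat_of_nonneg (fun n => F_nonneg _)]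
  rw [← tendsto_add_atTop_iff_nat 1]
  have key : ∀ N : ℕ, ∑ i ∈ Finset.range (N + 1), F (m, i)
      = (1 / (m:ℝ)^2) * (Hn m - (Hn (N + m) - Hn N)) := by
    intro N
    rw [Finset.sum_range_succ']
    have h0 : F (m, 0) = 0 := by unfold F; simp
    rw [h0, add_zero, sum_range_inner m hm N]
  simp_rw [key]
  have : Tendsto (fun N : ℕ => (1 / (m:ℝ)^2) * (Hn m - (Hn (N + m) - Hn N)))
      atTop (𝓝 ((1 / (m:ℝ)^2) * (Hn m - 0))) :=
    ((tendsto_const_nhds.sub (tendsto_Hn_diff m))).const_mul _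
  have e : Hn m / (m:ℝ)^2 = (1 / (m:ℝ)^2) * (Hn m - 0) := by ring
  rw [e]; exact this

lemma inner_hasSum' (w : ℝ) (m : ℕ) :
    HasSum (fun n : ℕ => w * F (m, n)) (w * (Hn m / (m:ℝ)^2)) := by
  rcases Nat.eq_zero_or_pos m with rfl | hm
  · have : ∀ n : ℕ, w * F (0, n) = 0 := by intro n; unfold F; simp
    simp_rw [this]
    simpa [Hn_zero] using hasSum_zero
  · exact (inner_hasSum m hm).mul_left w

lemma marginal (s : ℕ → ℝ) (hs : ∀ m, |s m| ≤ 1) :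
    (∑' p : ℕ × ℕ, s p.1 * F p) = ∑' m : ℕ, s m * (Hn m / (m:ℝ)^2) := by
  rw [Summable.tsum_prod (summable_wF (fun p => s p.1) (fun p => hs p.1))]
  exact tsum_congr fun m => (inner_hasSum' (s m) m).tsum_eq

lemma marginal_summable (s : ℕ → ℝ) (hs : ∀ m, |s m| ≤ 1) :
    Summable (fun m : ℕ => s m * (Hn m / (m:ℝ)^2)) := by
  have h := (summable_wF (fun p => s p.1) (fun p => hs p.1)).prod
  apply h.congr
  intro m
  exact (inner_hasSum' (s m) m).tsum_eq

lemma sum_antidiagonal_F (k : ℕ) :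
    ∑ p ∈ Finset.HasAntidiagonal.antidiagonal k, F p = 2 * Hn (k - 1) / (k:ℝ)^2 := by
  match k with
  | 0 => simp [F, Hn_zero]
  | 1 =>
    rw [show Finset.HasAntidiagonal.antidiagonal 1 = {(0,1),(1,0)} by decide]
    simp [F, Hn_zero]
  | (K+2) =>
    rw [Finset.Nat.sum_antidiagonal_eq_sum_range_succ_mk]
    rw [Finset.sum_range_succ]
    have hlast : F (K + 1 + 1, K + 2 - (K + 2)) = 0 := by
      simp [F]
    rw [Nat.sub_self] at hlast ⊢
    rw [hlast, add_zero, Finset.sum_range_succ']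
    have h0 : F (0, K + 2 - 0) = 0 := by simp [F]
    rw [h0, add_zero]
    have hterm : ∀ j ∈ Finset.range (K + 1), F (j + 1, K + 2 - (j + 1))
        = (1 / ((K:ℝ) + 2)^2) * (1 / ((j:ℝ) + 1) + 1 / (((K + 1 - j : ℕ) : ℝ))) := by
      intro j hj
      rw [Finset.mem_range] at hj
      have hj' : j ≤ K := by omega
      have e1 : K + 2 - (j + 1) = K + 1 - j := by omega
      have e2 : ((K + 1 - j : ℕ) : ℝ) = (K : ℝ) + 1 - j := by
        have : (K + 1 - j : ℕ) = K + 1 - j := rfl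
        push_cast [Nat.cast_sub (by omega : j ≤ K + 1)]
        ring
      rw [e1]
      unfold F
      simp only
      rw [e2]
      have hb : (0:ℝ) < (K:ℝ) + 1 - j := by
        have : (j:ℝ) ≤ K := by exact_mod_cast hj'
        linarith
      have hx : (0:ℝ) < (j:ℝ) + 1 := by positivity
      have hsum : ((j:ℕ):ℝ) + 1 + ((K:ℝ) + 1 - j) = (K:ℝ) + 2 := by push_cast; ring
      push_cast
      rw [show ((j:ℝ) + 1) + ((K:ℝ) + 1 - ↑j) = (K:ℝ) + 2 by ring]
      field_simp
      ring
    rw [Finset.sum_congr rfl hterm, ← Finset.mul_sum]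
    have hs1 : ∑ j ∈ Finset.range (K + 1), (1 / ((j:ℝ) + 1)) = Hn (K + 1) := rfl
    have hs2 : ∑ j ∈ Finset.range (K + 1), (1 / (((K + 1 - j : ℕ)) : ℝ)) = Hn (K + 1) := by
      rw [← Finset.sum_range_reflect (fun j => 1 / (((K + 1 - j : ℕ)) : ℝ)) (K + 1)]
      apply Finset.sum_congr rfl
      intro j hj
      rw [Finset.mem_range] at hj
      have : K + 1 - (K + 1 - 1 - j) = j + 1 := by omega
      rw [this]
      push_cast
      rfl
    rw [Finset.sum_add_distrib, hs1, hs2]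
    have : (K + 2 - 1 : ℕ) = K + 1 := by omega
    rw [this]
    push_cast
    ring

lemma grouping (w : ℕ → ℝ) (hw : ∀ k, |w k| ≤ 1) :
    HasSum (fun k : ℕ => w k * (2 * Hn (k - 1) / (k:ℝ)^2))
      (∑' p : ℕ × ℕ, w (p.1 + p.2) * F p) := by
  have hs : Summable (fun p : ℕ × ℕ => w (p.1 + p.2) * F p) :=
    summable_wF _ (fun p => hw _)
  have hfib := hs.hasSum.tsum_fiberwise (fun p => p.1 + p.2)
  have hfval : ∀ k : ℕ,
      (∑' p : ((fun p : ℕ × ℕ => p.1 + p.2) ⁻¹' {k}), w ((p : ℕ × ℕ).1 + (p : ℕ × ℕ).2) * F p)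
        = w k * (2 * Hn (k - 1) / (k:ℝ)^2) := by
    intro k
    have hset : ((fun p : ℕ × ℕ => p.1 + p.2) ⁻¹' {k}) = (Finset.HasAntidiagonal.antidiagonal k : Set (ℕ × ℕ)) := by
      ext p
      simp [Finset.HasAntidiagonal.mem_antidiagonal]
    rw [hset]; rw [Finset.tsum_subtype' (Finset.HasAntidiagonal.antidiagonal k) (fun p : ℕ × ℕ => w (p.1 + p.2) * F p)]
    have : ∀ p ∈ Finset.HasAntidiagonal.antidiagonal k, w (p.1 + p.2) * F p = w k * F p := by
      intro p hp
      rw [Finset.HasAntidiagonal.mem_antidiagonal] at hp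
      rw [hp]
    rw [Finset.sum_congr rfl this, ← Finset.mul_sum, sum_antidiagonal_F]
  have heq : (fun k : ℕ =>
      (∑' p : ((fun p : ℕ × ℕ => p.1 + p.2) ⁻¹' {k}), w ((p : ℕ × ℕ).1 + (p : ℕ × ℕ).2) * F p))
      = fun k => w k * (2 * Hn (k - 1) / (k:ℝ)^2) := funext hfval
  rw [← heq]
  exact hfib

lemma abs_neg_one_pow' (k : ℕ) : |(-1 : ℝ)^k| ≤ 1 := le_of_eq (abs_neg_one_pow k)

lemma summable_Z : Summable (fun n : ℕ => 1 / (n : ℝ)^3) :=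
  Real.summable_one_div_nat_pow.mpr (by norm_num)

lemma summable_N : Summable (fun k : ℕ => (-1 : ℝ)^k * (1 / (k : ℝ)^3)) := by
  apply Summable.of_norm_bounded summable_Z
  intro k
  rw [Real.norm_eq_abs, abs_mul, abs_of_nonneg (by positivity : (0:ℝ) ≤ 1 / (k:ℝ)^3)]
  calc |(-1:ℝ)^k| * (1 / (k:ℝ)^3) ≤ 1 * (1 / (k:ℝ)^3) :=
        mul_le_mul_of_nonneg_right (abs_neg_one_pow' k) (by positivity)
    _ = 1 / (k:ℝ)^3 := one_mul _

lemma pnat_tsum (f : ℕ → ℝ) (hf : f 0 = 0) : ∑' x : ℕ+, f (x : ℕ) = ∑' n : ℕ, f n := by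
  apply Function.Injective.tsum_eq (fun a b h => PNat.coe_injective h)
  intro n hn
  rcases Nat.eq_zero_or_pos n with rfl | hp
  · exact absurd hf hn
  · exact ⟨⟨n, hp⟩, rfl⟩

lemma N_eval :
    ∑' k : ℕ, (-1:ℝ)^k * (1 / (k:ℝ)^3) = -(3/4) * ∑' n : ℕ, 1 / (n:ℝ)^3 := by
  set Z := ∑' n : ℕ, 1 / (n:ℝ)^3 with hZdef
  set N := ∑' k : ℕ, (-1:ℝ)^k * (1 / (k:ℝ)^3) with hNdef
  have h1 : HasSum (fun k : ℕ => 1 / (k:ℝ)^3 + (-1:ℝ)^k * (1 / (k:ℝ)^3)) (Z + N) :=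
    summable_Z.hasSum.add summable_N.hasSum
  have h2 : ∑' k : ℕ, (1 / (k:ℝ)^3 + (-1:ℝ)^k * (1 / (k:ℝ)^3)) = (1/4) * Z := by
    have hinj : Function.Injective (fun j : ℕ => 2 * j) := fun a b h => by dsimp at h; omega
    have hsupp : Function.support (fun k : ℕ => 1 / (k:ℝ)^3 + (-1:ℝ)^k * (1 / (k:ℝ)^3))
        ⊆ Set.range (fun j : ℕ => 2 * j) := by
      intro k hk
      rcases Nat.even_or_odd k with he | ho
      · obtain ⟨j, hj⟩ := he
        exact ⟨j, by dsimp; omega⟩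
      · exfalso
        apply hk
        show (1:ℝ) / (k:ℝ)^3 + (-1:ℝ)^k * (1 / (k:ℝ)^3) = 0
        rw [ho.neg_one_pow]
        ring
    have := Function.Injective.tsum_eq hinj hsupp
    rw [← this]
    have hpt : ∀ j : ℕ, 1 / (((2*j : ℕ)):ℝ)^3 + (-1:ℝ)^(2*j) * (1 / (((2*j : ℕ)):ℝ)^3)
        = (1/4) * (1 / (j:ℝ)^3) := by
      intro j
      rcases Nat.eq_zero_or_pos j with rfl | hj
      · norm_num
      · have hj' : (0:ℝ) < j := by exact_mod_cast hj
        rw [pow_mul, neg_one_sq, one_pow]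
        push_cast
        field_simp
        ring
    calc ∑' j : ℕ, (1 / (((2*j : ℕ)):ℝ)^3 + (-1:ℝ)^(2*j) * (1 / (((2*j : ℕ)):ℝ)^3))
        = ∑' j : ℕ, (1/4) * (1 / (j:ℝ)^3) := tsum_congr hpt
      _ = (1/4) * Z := by rw [tsum_mul_left]
  have : Z + N = (1/4) * Z := by rw [← h1.tsum_eq, h2]
  linarith

lemma Hdiv_pointwise (k : ℕ) :
    Hn k / (k:ℝ)^2 = Hn (k - 1) / (k:ℝ)^2 + 1 / (k:ℝ)^3 := by
  match k with
  | 0 => simp [Hn_zero]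
  | (j+1) =>
    have h : (0:ℝ) < (j:ℝ) + 1 := by positivity
    rw [show j + 1 - 1 = j from rfl, Hn_succ]
    push_cast
    field_simp

lemma HasSum.congr_fn {ι : Type*} {f g : ι → ℝ} {a : ℝ} (h : HasSum f a)
    (he : ∀ i, g i = f i) : HasSum g a := by
  rwa [show g = f from funext he]

lemma F_comm (p : ℕ × ℕ) : F (p.2, p.1) = F p := by
  unfold F
  simp only
  rw [mul_comm ((p.2:ℝ)) ((p.1:ℝ)), add_comm ((p.2:ℝ)) ((p.1:ℝ))]

lemma F_double (a b : ℕ) : (2:ℝ) * (1 + 1) * F (2*a, 2*b) = (1/2) * F (a, b) := by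
  rcases Nat.eq_zero_or_pos a with rfl | ha
  · simp [F]
  rcases Nat.eq_zero_or_pos b with rfl | hb
  · simp [F]
  have ha' : (0:ℝ) < a := by exact_mod_cast ha
  have hb' : (0:ℝ) < b := by exact_mod_cast hb
  unfold F
  simp only
  push_cast
  field_simp
  ring

lemma A_eval :
    ∑' m : ℕ, (-1:ℝ)^m * (Hn m / (m:ℝ)^2) = -(5/8) * ∑' n : ℕ, 1 / (n:ℝ)^3 := by
  set Z := ∑' n : ℕ, 1 / (n:ℝ)^3 with hZdef
  set A := ∑' m : ℕ, (-1:ℝ)^m * (Hn m / (m:ℝ)^2) with hAdef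
  set C := ∑' p : ℕ × ℕ, F p with hCdef
  set B := ∑' p : ℕ × ℕ, (-1:ℝ)^(p.1 + p.2) * F p with hBdef
  set N := ∑' k : ℕ, (-1:ℝ)^k * (1 / (k:ℝ)^3) with hNdef
  -- A as a double sum
  have hA2 : ∑' p : ℕ × ℕ, (-1:ℝ)^p.1 * F p = A :=
    marginal (fun m => (-1:ℝ)^m) (fun m => abs_neg_one_pow' m)
  have hasA : HasSum (fun m : ℕ => (-1:ℝ)^m * (Hn m / (m:ℝ)^2)) A :=
    (marginal_summable (fun m => (-1:ℝ)^m) (fun m => abs_neg_one_pow' m)).hasSum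
  -- C as a single sum
  have hC1 : ∑' m : ℕ, Hn m / (m:ℝ)^2 = C := by
    have := marginal (fun _ => (1:ℝ)) (fun m => by norm_num)
    simp only [one_mul] at this
    rw [← this]
  have hCs : HasSum (fun m : ℕ => Hn m / (m:ℝ)^2) C := by
    rw [← hC1]
    exact ((marginal_summable (fun _ => (1:ℝ)) (fun m => by norm_num)).congr
      (fun m => one_mul _)).hasSum
  -- grouping with w = 1 : C = C/2 + Z
  have hG1 : HasSum (fun k : ℕ => Hn (k-1) / (k:ℝ)^2) ((1/2) * C) := by
    have h := (grouping (fun _ => (1:ℝ)) (fun k => by norm_num)).mul_left (1/2)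
    have e : ∑' p : ℕ × ℕ, (1:ℝ) * F p = C := by
      rw [hCdef]; exact tsum_congr fun p => one_mul _
    rw [e] at h
    exact h.congr_fn fun k => by ring
  have hCZ : C = (1/2) * C + Z := by
    have h := hG1.add summable_Z.hasSum
    have h' : HasSum (fun k : ℕ => Hn k / (k:ℝ)^2) ((1/2) * C + Z) :=
      h.congr_fn fun k => Hdiv_pointwise k
    exact hCs.unique h'
  -- grouping with w = (-1)^k : B = 2A - 2N
  have hB2 : B = 2 * A - 2 * N := by
    have hGB : HasSum (fun k : ℕ => (-1:ℝ)^k * (2 * Hn (k-1) / (k:ℝ)^2)) B :=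
      grouping (fun k => (-1:ℝ)^k) (fun k => abs_neg_one_pow' k)
    have h2 : HasSum (fun k : ℕ => 2 * ((-1:ℝ)^k * (Hn k / (k:ℝ)^2))
        - 2 * ((-1:ℝ)^k * (1 / (k:ℝ)^3))) (2 * A - 2 * N) :=
      (hasA.mul_left 2).sub (summable_N.hasSum.mul_left 2)
    refine hGB.unique (h2.congr_fn fun k => ?_)
    have := Hdiv_pointwise k
    have e : Hn (k-1) / (k:ℝ)^2 = Hn k / (k:ℝ)^2 - 1 / (k:ℝ)^3 := by linarith
    rw [mul_div_assoc, mul_comm (2:ℝ) (Hn (k-1) / (k:ℝ)^2), e]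
    ring
  -- swap symmetry
  have hAswap : ∑' p : ℕ × ℕ, (-1:ℝ)^p.2 * F p = A := by
    have hswap := (Equiv.prodComm ℕ ℕ).tsum_eq (f := fun p : ℕ × ℕ => (-1:ℝ)^p.1 * F p)
    rw [← hA2, ← hswap]
    apply tsum_congr
    intro p
    have : (Equiv.prodComm ℕ ℕ) p = (p.2, p.1) := rfl
    rw [this]
    simp only
    rw [F_comm]
  -- parity relation : C + A + A + B = C/2
  have hparity : C + (A + (A + B)) = (1/2) * C := by
    have s1 : HasSum (fun p : ℕ × ℕ => (-1:ℝ)^p.1 * F p) A := by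
      rw [← hA2]
      exact (summable_wF _ (fun p => abs_neg_one_pow' p.1)).hasSum
    have s2 : HasSum (fun p : ℕ × ℕ => (-1:ℝ)^p.2 * F p) A := by
      rw [← hAswap]
      exact (summable_wF _ (fun p => abs_neg_one_pow' p.2)).hasSum
    have s12 : HasSum (fun p : ℕ × ℕ => (-1:ℝ)^(p.1 + p.2) * F p) B :=
      (summable_wF _ (fun p => abs_neg_one_pow' (p.1 + p.2))).hasSum
    have sF : HasSum F C := summable_F.hasSum
    have hbig : HasSum (fun p : ℕ × ℕ => (1 + (-1:ℝ)^p.1) * (1 + (-1:ℝ)^p.2) * F p)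
        (C + (A + (A + B))) := by
      refine (sF.add (s1.add (s2.add s12))).congr_fn fun p => ?_
      rw [pow_add]
      ring
    have E2 : ∑' p : ℕ × ℕ, (1 + (-1:ℝ)^p.1) * (1 + (-1:ℝ)^p.2) * F p = (1/2) * C := by
      have hinj : Function.Injective (fun q : ℕ × ℕ => (2*q.1, 2*q.2)) := by
        intro a b h
        simp only [Prod.mk.injEq] at h
        exact Prod.ext (by omega) (by omega)
      have hsupp : Function.support (fun p : ℕ × ℕ => (1 + (-1:ℝ)^p.1) * (1 + (-1:ℝ)^p.2) * F p)
          ⊆ Set.range (fun q : ℕ × ℕ => (2*q.1, 2*q.2)) := by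
        intro p hp
        rcases Nat.even_or_odd p.1 with he1 | ho1
        · rcases Nat.even_or_odd p.2 with he2 | ho2
          · obtain ⟨j, hj⟩ := he1
            obtain ⟨l, hl⟩ := he2
            exact ⟨(j, l), Prod.ext (by dsimp; omega) (by dsimp; omega)⟩
          · exfalso; apply hp
            show (1 + (-1:ℝ)^p.1) * (1 + (-1:ℝ)^p.2) * F p = 0
            rw [ho2.neg_one_pow]; ring
        · exfalso; apply hp
          show (1 + (-1:ℝ)^p.1) * (1 + (-1:ℝ)^p.2) * F p = 0
          rw [ho1.neg_one_pow]; ring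
      have := Function.Injective.tsum_eq hinj hsupp
      rw [← this]
      have hpt : ∀ q : ℕ × ℕ, (1 + (-1:ℝ)^(2*q.1)) * (1 + (-1:ℝ)^(2*q.2)) * F (2*q.1, 2*q.2)
          = (1/2) * F q := by
        intro q
        rw [pow_mul, pow_mul, neg_one_sq, one_pow, one_pow]
        have := F_double q.1 q.2
        calc (1 + 1) * (1 + 1) * F (2*q.1, 2*q.2) = 2 * (1+1) * F (2*q.1, 2*q.2) := by ring
          _ = (1/2) * F (q.1, q.2) := F_double q.1 q.2
          _ = (1/2) * F q := by rw [Prod.mk.eta]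
      calc ∑' q : ℕ × ℕ, (1 + (-1:ℝ)^(2*q.1)) * (1 + (-1:ℝ)^(2*q.2)) * F (2*q.1, 2*q.2)
          = ∑' q : ℕ × ℕ, (1/2) * F q := tsum_congr hpt
        _ = (1/2) * C := by rw [hCdef, tsum_mul_left]
    rw [← hbig.tsum_eq, E2]
  -- final linear algebra
  have hN : N = -(3/4) * Z := N_eval
  linarith

/-- The alternating Mordell–Tornheim value
`T(1̄,1;1) = ∑_{m1,m2 ≥ 1} (-1)^{m1}/(m1 m2 (m1+m2))` (as an iterated sum)
equals `-(5/8) ζ(3)`. -/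
theorem stmt_1 :
    (∑' m1 : ℕ+, ∑' m2 : ℕ+,
        (-1 : ℝ) ^ (m1 : ℕ) / ((m1 : ℝ) * (m2 : ℝ) * ((m1 : ℝ) + (m2 : ℝ))))
      = -(5 / 8) * ∑' n : ℕ+, 1 / (n : ℝ) ^ 3 := by
  have hinner : ∀ m1 : ℕ+, (∑' m2 : ℕ+,
      (-1 : ℝ) ^ (m1 : ℕ) / ((m1 : ℝ) * (m2 : ℝ) * ((m1 : ℝ) + (m2 : ℝ))))
      = (-1 : ℝ) ^ (m1 : ℕ) * (Hn (m1 : ℕ) / ((m1 : ℕ) : ℝ)^2) := by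
    intro m1
    set m : ℕ := (m1 : ℕ) with hm
    have h0 : ((-1 : ℝ)^m * F (m, 0)) = 0 := by simp [F]
    have hpt : ∀ x : ℕ+, (-1 : ℝ) ^ (m1 : ℕ) / ((m1 : ℝ) * (x : ℝ) * ((m1 : ℝ) + (x : ℝ)))
        = (-1 : ℝ)^m * F (m, (x : ℕ)) := by
      intro x
      unfold F
      simp only
      rw [mul_one_div]
    calc (∑' m2 : ℕ+, (-1 : ℝ) ^ (m1 : ℕ) / ((m1 : ℝ) * (m2 : ℝ) * ((m1 : ℝ) + (m2 : ℝ))))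
        = ∑' x : ℕ+, (-1 : ℝ)^m * F (m, (x : ℕ)) := tsum_congr hpt
      _ = ∑' n : ℕ, (-1 : ℝ)^m * F (m, n) := pnat_tsum (fun n => (-1 : ℝ)^m * F (m, n)) h0
      _ = (-1 : ℝ)^m * (Hn m / (m : ℝ)^2) := (inner_hasSum' _ m).tsum_eq
  rw [tsum_congr hinner]
  have houter : (∑' m1 : ℕ+, (-1 : ℝ) ^ (m1 : ℕ) * (Hn (m1 : ℕ) / ((m1 : ℕ) : ℝ)^2))
      = ∑' m : ℕ, (-1 : ℝ)^m * (Hn m / (m : ℝ)^2) :=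
    pnat_tsum (fun m => (-1 : ℝ)^m * (Hn m / (m : ℝ)^2)) (by simp [Hn_zero])
  rw [houter, A_eval]
  congr 1
  have hrhs : (∑' n : ℕ+, 1 / ((n : ℝ)) ^ 3) = ∑' n : ℕ+, (fun k : ℕ => 1 / (k : ℝ)^3) ((n : ℕ)) := by
    apply tsum_congr; intro n; norm_cast
  rw [hrhs, pnat_tsum (fun k : ℕ => 1 / (k : ℝ)^3) (by norm_num)]
end

section
/- The Mordell–Tornheim value T(1,2;1) = ∑_{m1,m2≥1} 1/(m1·m2^2·(m1+m2)) equals π^4/72. -/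
open Real

noncomputable def fMT (p : ℕ+ × ℕ+) : ℝ :=
  1 / ((p.1 : ℝ) * (p.2 : ℝ) ^ 2 * ((p.1 : ℝ) + (p.2 : ℝ)))

noncomputable def gMT (p : ℕ+ × ℕ+) : ℝ :=
  1 / ((p.1 : ℝ) ^ 2 * (p.2 : ℝ) * ((p.1 : ℝ) + (p.2 : ℝ)))

noncomputable def hMT (p : ℕ+ × ℕ+) : ℝ :=
  (1 / (p.1 : ℝ) ^ 2) * (1 / (p.2 : ℝ) ^ 2)

lemma pnat_pos_real (n : ℕ+) : (0 : ℝ) < (n : ℝ) := by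
  exact_mod_cast n.pos

lemma hasSum_pnat_two : HasSum (fun n : ℕ+ => 1 / (n : ℝ) ^ 2) (π ^ 2 / 6) := by
  have h := hasSum_zeta_two
  have hinj : Function.Injective (fun n : ℕ+ => (n : ℕ)) := fun a b h => PNat.coe_injective h
  rw [← Function.Injective.hasSum_iff hinj] at h
  · exact h
  · intro x hx
    have hx0 : x = 0 := by
      by_contra h0
      exact hx ⟨⟨x, Nat.pos_of_ne_zero h0⟩, rfl⟩
    simp [hx0]

lemma summable_hMT : Summable hMT := by
  have hs : Summable (fun n : ℕ+ => 1 / (n : ℝ) ^ 2) := hasSum_pnat_two.summable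
  have h := Summable.mul_of_nonneg hs hs (fun n => by positivity) (fun n => by positivity)
  exact h

lemma tsum_hMT : ∑' p, hMT p = π ^ 4 / 36 := by
  have h := hasSum_pnat_two
  have := HasSum.mul h h summable_hMT
  have h4 : π ^ 2 / 6 * (π ^ 2 / 6) = π ^ 4 / 36 := by ring
  rw [h4] at this
  exact this.tsum_eq

lemma fMT_add_gMT (p : ℕ+ × ℕ+) : fMT p + gMT p = hMT p := by
  have h1 := pnat_pos_real p.1
  have h2 := pnat_pos_real p.2
  have h3 : (0:ℝ) < (p.1 : ℝ) + (p.2 : ℝ) := by linarith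
  unfold fMT gMT hMT
  field_simp

lemma fMT_nonneg (p : ℕ+ × ℕ+) : 0 ≤ fMT p := by
  have h1 := pnat_pos_real p.1
  have h2 := pnat_pos_real p.2
  unfold fMT; positivity

lemma gMT_nonneg (p : ℕ+ × ℕ+) : 0 ≤ gMT p := by
  have h1 := pnat_pos_real p.1
  have h2 := pnat_pos_real p.2
  unfold gMT; positivity

lemma fMT_le (p : ℕ+ × ℕ+) : fMT p ≤ hMT p := by
  have h1 := pnat_pos_real p.1
  have h2 := pnat_pos_real p.2
  have := gMT_nonneg p
  have := fMT_add_gMT p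
  linarith

lemma gMT_le (p : ℕ+ × ℕ+) : gMT p ≤ hMT p := by
  have := fMT_nonneg p
  have := fMT_add_gMT p
  linarith

lemma summable_fMT : Summable fMT :=
  Summable.of_nonneg_of_le fMT_nonneg fMT_le summable_hMT

lemma summable_gMT : Summable gMT :=
  Summable.of_nonneg_of_le gMT_nonneg gMT_le summable_hMT

lemma tsum_gMT_eq_fMT : ∑' p, gMT p = ∑' p, fMT p := by
  have h := (Equiv.prodComm ℕ+ ℕ+).tsum_eq fMT
  rw [← h]
  congr 1
  funext p
  unfold fMT gMT
  simp [Equiv.prodComm]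
  ring_nf

/-- The Mordell–Tornheim value `T(1,2;1) = ∑_{m1,m2 ≥ 1} 1/(m1 m2^2 (m1+m2))`
equals `π^4/72`. -/
theorem stmt_4 :
    (∑' m : ℕ+ × ℕ+, 1 / ((m.1 : ℝ) * (m.2 : ℝ) ^ 2 * ((m.1 : ℝ) + (m.2 : ℝ))))
      = Real.pi ^ 4 / 72 := by
  have key : ∑' p, fMT p + ∑' p, gMT p = π ^ 4 / 36 := by
    rw [← (summable_fMT.hasSum.add summable_gMT.hasSum).tsum_eq]
    rw [← tsum_hMT]
    exact tsum_congr fMT_add_gMT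
  rw [tsum_gMT_eq_fMT] at key
  have : ∑' p, fMT p = π ^ 4 / 72 := by linarith
  exact this
end

section
/- The depth-three Mordell–Tornheim value T(1,1,1;1) = ∑_{m1,m2,m3≥1} 1/(m1·m2·m3·(m1+m2+m3)) equals π^4/15. -/
open MeasureTheory Set Real

lemma aux_integrable {r : ℝ} (hr : 0 < r) :
    IntegrableOn (fun u : ℝ => u ^ 3 * rexp (-(r * u))) (Ioi 0) := by
  have h := Real.GammaIntegral_convergent (s := 4) (by norm_num)
  rw [show (0:ℝ) = r * 0 by ring, ← integrableOn_Ioi_comp_mul_left_iff _ _ hr] at h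
  have h2 : IntegrableOn (fun x => (r ^ 3)⁻¹ * (rexp (-(r * x)) * (r * x) ^ ((4:ℝ) - 1))) (Ioi 0) :=
    h.const_mul (r ^ 3)⁻¹
  refine IntegrableOn.congr_fun h2 (fun u hu => ?_) measurableSet_Ioi
  have hu0 : 0 < u := hu
  rw [show (4:ℝ) - 1 = ((3:ℕ):ℝ) by norm_num, Real.rpow_natCast]
  field_simp

lemma aux_value {r : ℝ} (hr : 0 < r) :
    ∫ u in Ioi (0:ℝ), u ^ 3 * rexp (-(r * u)) = 6 / r ^ 4 := by
  have h := Real.integral_rpow_mul_exp_neg_mul_Ioi (a := 4) (by norm_num) hr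
  have e1 : ∫ u in Ioi (0:ℝ), u ^ 3 * rexp (-(r * u))
      = ∫ u in Ioi (0:ℝ), u ^ ((4:ℝ) - 1) * rexp (-(r * u)) := by
    refine setIntegral_congr_fun measurableSet_Ioi (fun u hu => ?_)
    rw [show (4:ℝ) - 1 = ((3:ℕ):ℝ) by norm_num, Real.rpow_natCast]
  have hg : Real.Gamma 4 = 6 := by
    rw [show (4:ℝ) = ((3:ℕ):ℝ) + 1 by norm_num, Real.Gamma_nat_eq_factorial]; norm_num [Nat.factorial]
  rw [e1, h, hg, show ((4:ℝ)) = ((4:ℕ):ℝ) by norm_num, Real.rpow_natCast]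
  field_simp
open MeasureTheory Set Real ENNReal

lemma lintegral_image_deriv {s : Set ℝ} {f f' : ℝ → ℝ} (hs : MeasurableSet s)
    (hf' : ∀ x ∈ s, HasDerivWithinAt f (f' x) s x) (hf : InjOn f s) (g : ℝ → ℝ≥0∞) :
    ∫⁻ x in f '' s, g x = ∫⁻ x in s, ENNReal.ofReal |f' x| * g (f x) := by
  simpa only [ContinuousLinearMap.det_toSpanSingleton] using
    lintegral_image_eq_lintegral_abs_det_fderiv_mul volume hs
      (fun x hx => (hf' x hx).hasFDerivWithinAt) hf g

lemma image_exp : (fun u : ℝ => 1 - rexp (-u)) '' Ioi 0 = Ioo 0 1 := by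
  ext y
  simp only [mem_image, mem_Ioi, mem_Ioo]
  constructor
  · rintro ⟨u, hu, rfl⟩
    have h1 : rexp (-u) < 1 := by rw [Real.exp_lt_one_iff]; linarith
    have h2 : 0 < rexp (-u) := Real.exp_pos _
    exact ⟨by linarith, by linarith⟩
  · rintro ⟨h0, h1⟩
    refine ⟨-Real.log (1 - y), ?_, ?_⟩
    · have : Real.log (1 - y) < 0 := Real.log_neg (by linarith) (by linarith)
      simpa using this
    · simp only [neg_neg]
      rw [Real.exp_log (by linarith)]; ring

lemma hasDeriv_f (u : ℝ) : HasDerivAt (fun u : ℝ => 1 - rexp (-u)) (rexp (-u)) u := by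
  have h1 : HasDerivAt (fun u : ℝ => rexp (-u)) (rexp (-u) * -1) u :=
    (Real.hasDerivAt_exp (-u)).comp u (hasDerivAt_neg u)
  simpa using h1.const_sub 1

lemma claimB :
    ∫⁻ x in Ioo (0:ℝ) 1, ENNReal.ofReal ((-Real.log (1-x))^3 * x⁻¹)
      = ∑' k : ℕ, ENNReal.ofReal (6 / ((k:ℝ)+1)^4) := by
  rw [← image_exp, lintegral_image_deriv measurableSet_Ioi
      (fun u _ => (hasDeriv_f u).hasDerivWithinAt)
      (fun a _ b _ h => by
        have h' : 1 - rexp (-a) = 1 - rexp (-b) := h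
        have : rexp (-a) = rexp (-b) := by linarith
        simpa using Real.exp_eq_exp.1 this)]
  have key : ∀ u ∈ Ioi (0:ℝ),
      ENNReal.ofReal |rexp (-u)| *
        ENNReal.ofReal ((-Real.log (1 - (1 - rexp (-u))))^3 * (1 - rexp (-u))⁻¹)
      = ∑' k : ℕ, ENNReal.ofReal (u^3 * rexp (-(((k:ℝ)+1) * u))) := by
    intro u hu
    have hu0 : (0:ℝ) < u := hu
    have hq1 : rexp (-u) < 1 := by rw [Real.exp_lt_one_iff]; linarith
    have hq0 : (0:ℝ) < rexp (-u) := Real.exp_pos _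
    have hgeom : HasSum (fun k : ℕ => u^3 * rexp (-(((k:ℝ)+1) * u)))
        (rexp (-u) * ((-Real.log (1 - (1 - rexp (-u))))^3 * (1 - rexp (-u))⁻¹)) := by
      have h := (hasSum_geometric_of_lt_one hq0.le hq1).mul_left (u^3 * rexp (-u))
      have e : ∀ k : ℕ, u^3 * rexp (-u) * rexp (-u) ^ k = u^3 * rexp (-(((k:ℝ)+1) * u)) := by
        intro k
        rw [← Real.exp_nat_mul, mul_assoc, ← Real.exp_add]
        congr 1
        ring
      have e2 : u^3 * rexp (-u) * (1 - rexp (-u))⁻¹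
          = rexp (-u) * ((-Real.log (1 - (1 - rexp (-u))))^3 * (1 - rexp (-u))⁻¹) := by
        rw [show (1:ℝ) - (1 - rexp (-u)) = rexp (-u) by ring, Real.log_exp]
        ring
      rw [← e2]
      exact h.congr_fun (fun k => (e k).symm)
    rw [abs_of_pos hq0, ← ENNReal.ofReal_mul hq0.le, ← hgeom.tsum_eq,
      ENNReal.ofReal_tsum_of_nonneg (fun k => by positivity) hgeom.summable]
  rw [setLIntegral_congr_fun measurableSet_Ioi key]
  rw [lintegral_tsum (fun k => by fun_prop)]
  congr 1
  ext k
  rw [← ofReal_integral_eq_lintegral_ofReal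
      (aux_integrable (by positivity : (0:ℝ) < (k:ℝ)+1))
      ((ae_restrict_iff' measurableSet_Ioi).2 (Filter.Eventually.of_forall
        (fun u hu => by have : (0:ℝ) < u := hu; positivity))),
    aux_value (by positivity : (0:ℝ) < (k:ℝ)+1)]

lemma powint (n : ℕ) :
    ∫⁻ x in Ioo (0:ℝ) 1, ENNReal.ofReal (x ^ n) = ENNReal.ofReal (1/((n:ℝ)+1)) := by
  have hre : ∫ x in Ioo (0:ℝ) 1, x ^ n = 1/((n:ℝ)+1) := by
    rw [← MeasureTheory.integral_Ioc_eq_integral_Ioo,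
      ← intervalIntegral.integral_of_le zero_le_one, integral_pow]
    push_cast; norm_num
  rw [← hre, ofReal_integral_eq_lintegral_ofReal
    (((continuous_pow n).continuousOn.integrableOn_compact isCompact_Icc).mono_set
      Ioo_subset_Icc_self)
    ((ae_restrict_iff' measurableSet_Ioo).2 (Filter.Eventually.of_forall
      (fun x hx => by have : (0:ℝ) < x := hx.1; positivity)))]

lemma pnat_log_sum {x : ℝ} (hx0 : 0 < x) (hx1 : x < 1) :
    ∑' n : ℕ+, ENNReal.ofReal (x ^ (n:ℕ) / (n:ℕ)) = ENNReal.ofReal (-Real.log (1-x)) := by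
  rw [← Equiv.tsum_eq Equiv.pnatEquivNat.symm]
  have hs := Real.hasSum_pow_div_log_of_abs_lt_one (x := x) (by rw [abs_of_pos hx0]; exact hx1)
  calc ∑' k : ℕ, ENNReal.ofReal (x ^ ((Equiv.pnatEquivNat.symm k : ℕ+):ℕ) / ((Equiv.pnatEquivNat.symm k : ℕ+):ℕ))
      = ∑' k : ℕ, ENNReal.ofReal (x ^ (k+1) / ((k:ℝ)+1)) := by
        apply tsum_congr; intro k
        congr 1 <;> simp [Equiv.pnatEquivNat] <;> push_cast <;> ring
    _ = ENNReal.ofReal (-Real.log (1-x)) := by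
        rw [← ENNReal.ofReal_tsum_of_nonneg (fun k => by positivity) hs.summable, hs.tsum_eq]

lemma pointwise_triple {x : ℝ} (hx0 : 0 < x) (hx1 : x < 1) :
    ∑' m : ℕ+ × ℕ+ × ℕ+,
      ENNReal.ofReal ((1/((m.1:ℝ) * (m.2.1:ℝ) * (m.2.2:ℝ))) * x ^ ((m.1:ℕ) + (m.2.1:ℕ) + (m.2.2:ℕ) - 1))
      = ENNReal.ofReal ((-Real.log (1-x))^3 * x⁻¹) := by
  have hterm : ∀ m : ℕ+ × ℕ+ × ℕ+,
      ENNReal.ofReal ((1/((m.1:ℝ) * (m.2.1:ℝ) * (m.2.2:ℝ))) * x ^ ((m.1:ℕ) + (m.2.1:ℕ) + (m.2.2:ℕ) - 1))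
      = ENNReal.ofReal x⁻¹ * (ENNReal.ofReal (x ^ (m.1:ℕ) / (m.1:ℕ)) *
          (ENNReal.ofReal (x ^ (m.2.1:ℕ) / (m.2.1:ℕ)) * ENNReal.ofReal (x ^ (m.2.2:ℕ) / (m.2.2:ℕ)))) := by
    rintro ⟨a, b, c⟩
    rw [← ENNReal.ofReal_mul (by positivity), ← ENNReal.ofReal_mul (by positivity),
      ← ENNReal.ofReal_mul (by positivity)]
    congr 1
    have ha : (1:ℕ) ≤ (a:ℕ) + (b:ℕ) + (c:ℕ) :=
      le_trans a.one_le ((Nat.le_add_right (a:ℕ) (b:ℕ)).trans (Nat.le_add_right _ _))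
    rw [pow_sub₀ _ hx0.ne' ha, pow_add, pow_add]
    have ha0 : (0:ℝ) < (a:ℕ) := by exact_mod_cast a.pos
    have hb0 : (0:ℝ) < (b:ℕ) := by exact_mod_cast b.pos
    have hc0 : (0:ℝ) < (c:ℕ) := by exact_mod_cast c.pos
    field_simp
  rw [tsum_congr hterm, ENNReal.tsum_mul_left, ENNReal.tsum_prod']
  simp_rw [ENNReal.tsum_prod', ENNReal.tsum_mul_left, ENNReal.tsum_mul_right]
  rw [pnat_log_sum hx0 hx1]
  have hL : 0 ≤ -Real.log (1-x) := by
    have := Real.log_nonpos (by linarith) (by linarith : (1:ℝ) - x ≤ 1)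
    linarith
  rw [← ENNReal.ofReal_mul hL, ← ENNReal.ofReal_mul hL, ← ENNReal.ofReal_mul (by positivity)]
  congr 1
  ring

lemma claimA :
    ∑' m : ℕ+ × ℕ+ × ℕ+,
      ENNReal.ofReal (1/((m.1:ℝ)*(m.2.1:ℝ)*(m.2.2:ℝ)*((m.1:ℝ)+(m.2.1:ℝ)+(m.2.2:ℝ))))
      = ∫⁻ x in Ioo (0:ℝ) 1, ENNReal.ofReal ((-Real.log (1-x))^3 * x⁻¹) := by
  have per : ∀ m : ℕ+ × ℕ+ × ℕ+,
      ENNReal.ofReal (1/((m.1:ℝ)*(m.2.1:ℝ)*(m.2.2:ℝ)*((m.1:ℝ)+(m.2.1:ℝ)+(m.2.2:ℝ))))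
      = ∫⁻ x in Ioo (0:ℝ) 1,
          ENNReal.ofReal ((1/((m.1:ℝ)*(m.2.1:ℝ)*(m.2.2:ℝ))) * x ^ ((m.1:ℕ)+(m.2.1:ℕ)+(m.2.2:ℕ) - 1)) := by
    rintro ⟨a,b,c⟩
    have hsplit : ∀ x ∈ Ioo (0:ℝ) 1,
        ENNReal.ofReal ((1/((a:ℝ)*(b:ℝ)*(c:ℝ))) * x ^ ((a:ℕ)+(b:ℕ)+(c:ℕ) - 1))
        = ENNReal.ofReal (1/((a:ℝ)*(b:ℝ)*(c:ℝ))) * ENNReal.ofReal (x ^ ((a:ℕ)+(b:ℕ)+(c:ℕ) - 1)) :=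
      fun x hx => ENNReal.ofReal_mul (by positivity)
    rw [setLIntegral_congr_fun measurableSet_Ioo hsplit,
      lintegral_const_mul' _ _ ENNReal.ofReal_ne_top, powint,
      ← ENNReal.ofReal_mul (by positivity)]
    congr 1
    have ha0 : (0:ℝ) < (a:ℕ) := by exact_mod_cast a.pos
    have hb0 : (0:ℝ) < (b:ℕ) := by exact_mod_cast b.pos
    have hc0 : (0:ℝ) < (c:ℕ) := by exact_mod_cast c.pos
    have h1 : (1:ℕ) ≤ (a:ℕ)+(b:ℕ)+(c:ℕ) :=
      le_trans a.one_le ((Nat.le_add_right (a:ℕ) (b:ℕ)).trans (Nat.le_add_right _ _))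
    have hcast : (((a:ℕ)+(b:ℕ)+(c:ℕ) - 1 : ℕ) : ℝ) + 1 = (a:ℕ)+(b:ℕ)+(c:ℕ) := by
      push_cast [h1]; ring
    rw [hcast]
    field_simp
  rw [tsum_congr per, ← lintegral_tsum (fun m => by fun_prop)]
  exact setLIntegral_congr_fun measurableSet_Ioo
    (fun x hx => pointwise_triple hx.1 hx.2)

lemma claimC :
    ∑' k : ℕ, ENNReal.ofReal (6 / ((k:ℝ)+1)^4) = ENNReal.ofReal (Real.pi^4/15) := by
  have h4 := hasSum_zeta_four
  have h5 : HasSum (fun k : ℕ => (1:ℝ)/((k:ℝ)+1)^4) (Real.pi^4/90) := by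
    have := (hasSum_nat_add_iff' (f := fun n : ℕ => (1:ℝ)/(n:ℝ)^4) 1).2 h4
    simpa [Finset.sum_range_one] using this
  have h6 : HasSum (fun k : ℕ => 6 / ((k:ℝ)+1)^4) (Real.pi^4/15) := by
    have := h5.mul_left 6
    simp only [← mul_div_assoc, mul_one] at this
    rw [show Real.pi^4/15 = 6 * Real.pi^4/90 by ring]
    exact this
  rw [← h6.tsum_eq, ENNReal.ofReal_tsum_of_nonneg (fun k => by positivity) h6.summable]

/-- The depth-three Mordell–Tornheim value
`T(1,1,1;1) = ∑_{m1,m2,m3 ≥ 1} 1/(m1 m2 m3 (m1+m2+m3))` equals `π^4/15`. -/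
theorem stmt_5 :
    (∑' m : ℕ+ × ℕ+ × ℕ+,
        1 / ((m.1 : ℝ) * (m.2.1 : ℝ) * (m.2.2 : ℝ) *
          ((m.1 : ℝ) + (m.2.1 : ℝ) + (m.2.2 : ℝ))))
      = Real.pi ^ 4 / 15 := by
  have hG : ∑' m : ℕ+ × ℕ+ × ℕ+,
      ENNReal.ofReal (1/((m.1:ℝ)*(m.2.1:ℝ)*(m.2.2:ℝ)*((m.1:ℝ)+(m.2.1:ℝ)+(m.2.2:ℝ))))
      = ENNReal.ofReal (Real.pi^4/15) := by
    rw [claimA, claimB, claimC]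
  calc (∑' m : ℕ+ × ℕ+ × ℕ+,
        1 / ((m.1 : ℝ) * (m.2.1 : ℝ) * (m.2.2 : ℝ) *
          ((m.1 : ℝ) + (m.2.1 : ℝ) + (m.2.2 : ℝ))))
      = ∑' m : ℕ+ × ℕ+ × ℕ+,
        (ENNReal.ofReal (1/((m.1:ℝ)*(m.2.1:ℝ)*(m.2.2:ℝ)*((m.1:ℝ)+(m.2.1:ℝ)+(m.2.2:ℝ))))).toReal := by
        refine tsum_congr (fun m => ?_)
        rw [ENNReal.toReal_ofReal (by positivity)]
    _ = (∑' m : ℕ+ × ℕ+ × ℕ+,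
        ENNReal.ofReal (1/((m.1:ℝ)*(m.2.1:ℝ)*(m.2.2:ℝ)*((m.1:ℝ)+(m.2.1:ℝ)+(m.2.2:ℝ))))).toReal :=
        (ENNReal.tsum_toReal_eq (fun m => ENNReal.ofReal_ne_top)).symm
    _ = Real.pi ^ 4 / 15 := by
        rw [hG]; exact ENNReal.toReal_ofReal (by positivity)
end

section
/- Let p be a prime, r ≥ 1, and s1,…,s_{n+1} ≥ 1. Then Z_{p^r}(s1,…,s_{n+1}) ≡ (-1)^{s_{n+1}} ( T_{p^r}(s1,…,s_n; s_{n+1}) + s_{n+1} p^r T_{p^r}(s1,…,s_n; s_{n+1}+1) ) (mod p^{2r}), where the congruence is between p-integral rational numbers (i.e., the difference, written in lowest terms, has numerator divisible by p^{2r}). -/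
/-- `Z_{p^r}(s_1,…,s_d)`: the sum of `1/(k_1^{s_1} ⋯ k_d^{s_d})` over tuples of
positive integers not divisible by `p` with `k_1 + ⋯ + k_d = p^r`. -/
def Zsum (p r : ℕ) {d : ℕ} (s : Fin d → ℕ) : ℚ :=
  ∑ k ∈ (Finset.Nat.antidiagonalTuple d (p ^ r)).filter
      (fun k => ∀ i, 0 < k i ∧ ¬ p ∣ k i),
    ∏ i, 1 / (k i : ℚ) ^ s i

/-- The finite Mordell–Tornheim sum `T_{p^r}(a_1,…,a_m; λ)`: the sum of
`1/(k_1^{a_1} ⋯ k_m^{a_m} (k_1+⋯+k_m)^λ)` over tuples of positive integers not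
divisible by `p` whose sum is `< p^r` and not divisible by `p`. -/
def Tsum (p r : ℕ) {m : ℕ} (a : Fin m → ℕ) (lam : ℕ) : ℚ :=
  ∑ k ∈ (Fintype.piFinset fun _ : Fin m => Finset.range (p ^ r)).filter
      (fun k => (∀ i, 0 < k i ∧ ¬ p ∣ k i) ∧ (∑ i, k i) < p ^ r ∧ ¬ p ∣ (∑ i, k i)),
    (∏ i, 1 / (k i : ℚ) ^ a i) * (1 / ((∑ i, k i : ℕ) : ℚ) ^ lam)

lemma bin_dvd (K x : ℤ) (t : ℕ) :
    x ^ 2 ∣ (K - x) ^ (t + 1) - K ^ (t + 1) + ((t : ℤ) + 1) * K ^ t * x := by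
  induction t with
  | zero => refine ⟨0, by ring⟩
  | succ t ih =>
    obtain ⟨c, hc⟩ := ih
    refine ⟨(K - x) * c + ((t : ℤ) + 1) * K ^ t, ?_⟩
    push_cast
    linear_combination (K - x) * hc

lemma key_dvd (K x : ℤ) (t : ℕ) :
    x ^ 2 ∣ K ^ (t + 2) - (K - x) ^ (t + 1) * (K + ((t : ℤ) + 1) * x) := by
  obtain ⟨c, hc⟩ := bin_dvd K x t
  exact ⟨-(K + ((t : ℤ) + 1) * x) * c + ((t : ℤ) + 1) ^ 2 * K ^ t,
    by linear_combination (-(K + ((t : ℤ) + 1) * x)) * hc⟩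

lemma term_bound (p : ℕ) [hp : Fact p.Prime] {r : ℕ} {K : ℕ} (hKp : ¬ p ∣ K)
    (hKlt : K < p ^ r) (hyp : ¬ p ∣ (p ^ r - K)) {e : ℕ} (he : 1 ≤ e) :
    padicNorm p (1 / ((p ^ r - K : ℕ) : ℚ) ^ e
      - (-1 : ℚ) ^ e * (1 / (K : ℚ) ^ e + (e : ℚ) * (p : ℚ) ^ r * (1 / (K : ℚ) ^ (e + 1))))
      ≤ (p : ℚ) ^ (-(2 * r : ℤ)) := by
  obtain ⟨t, rfl⟩ : ∃ t, e = t + 1 := ⟨e - 1, by omega⟩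
  have hK0 : K ≠ 0 := fun h => hKp (h ▸ dvd_zero p)
  have hy0 : p ^ r - K ≠ 0 := by omega
  set y : ℕ := p ^ r - K with hy
  have hycast : (y : ℚ) = (p : ℚ) ^ r - (K : ℚ) := by
    rw [hy]; push_cast [Nat.cast_sub hKlt.le]; ring
  set N : ℤ := (K : ℤ) ^ (t + 2) - ((K : ℤ) - (p : ℤ) ^ r) ^ (t + 1) * ((K : ℤ) + ((t : ℤ) + 1) * (p : ℤ) ^ r) with hN
  have hKQ : (K : ℚ) ≠ 0 := by exact_mod_cast hK0
  have hyQ : (y : ℚ) ≠ 0 := by exact_mod_cast hy0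
  have hE : 1 / (y : ℚ) ^ (t + 1)
      - (-1 : ℚ) ^ (t + 1) * (1 / (K : ℚ) ^ (t + 1) + ((t + 1 : ℕ) : ℚ) * (p : ℚ) ^ r * (1 / (K : ℚ) ^ (t + 1 + 1)))
      = (N : ℚ) / ((y ^ (t + 1) * K ^ (t + 2) : ℕ) : ℚ) := by
    have hneg : ((K : ℚ) - (p : ℚ) ^ r) ^ (t + 1) = (-1 : ℚ) ^ (t + 1) * (y : ℚ) ^ (t + 1) := by
      have h1 : (K : ℚ) - (p : ℚ) ^ r = -1 * (y : ℚ) := by rw [hycast]; ring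
      rw [h1, mul_pow]
    rw [hN]
    push_cast
    rw [hneg]
    field_simp
    ring
  have hdvd : ((p ^ (2 * r) : ℕ) : ℤ) ∣ N := by
    have := key_dvd (K : ℤ) ((p : ℤ) ^ r) t
    rw [hN]
    push_cast
    rw [two_mul, pow_add, ← sq]
    exact this
  have hden : padicNorm p ((y ^ (t + 1) * K ^ (t + 2) : ℕ) : ℚ) = 1 := by
    rw [padicNorm.nat_eq_one_iff]
    intro h
    rcases (Nat.Prime.dvd_mul hp.out).1 h with h' | h'
    · exact hyp (hp.out.dvd_of_dvd_pow h')
    · exact hKp (hp.out.dvd_of_dvd_pow h')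
  calc padicNorm p _ = padicNorm p ((N : ℚ)) / padicNorm p ((y ^ (t + 1) * K ^ (t + 2) : ℕ) : ℚ) := by
        rw [hE, padicNorm.div]
    _ = padicNorm p ((N : ℚ)) := by rw [hden, div_one]
    _ ≤ (p : ℚ) ^ (-((2 * r : ℕ) : ℤ)) := padicNorm.dvd_iff_norm_le.1 (by exact_mod_cast hdvd)
    _ = (p : ℚ) ^ (-(2 * r : ℤ)) := by norm_cast

/-- For a prime `p`, `r ≥ 1` and exponents `s_1,…,s_{n+1} ≥ 1`,
`Z_{p^r}(s_1,…,s_{n+1}) ≡ (-1)^{s_{n+1}} (T_{p^r}(s_1,…,s_n; s_{n+1})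
  + s_{n+1} p^r T_{p^r}(s_1,…,s_n; s_{n+1}+1)) (mod p^{2r})`
as `p`-integral rationals, i.e. the `p`-adic norm of the difference is
at most `p^{-2r}`. -/
theorem stmt_7 (p : ℕ) (hp : p.Prime) (r : ℕ) (hr : 1 ≤ r) (n : ℕ)
    (s : Fin (n + 1) → ℕ) (hs : ∀ i, 1 ≤ s i) :
    padicNorm p
        (Zsum p r s -
          (-1 : ℚ) ^ (s (Fin.last n)) *
            (Tsum p r (fun i : Fin n => s i.castSucc) (s (Fin.last n)) +
              (s (Fin.last n) : ℚ) * (p : ℚ) ^ r *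
                Tsum p r (fun i : Fin n => s i.castSucc) (s (Fin.last n) + 1)))
      ≤ (p : ℚ) ^ (-(2 * r : ℤ)) := by
  haveI : Fact p.Prime := ⟨hp⟩
  have hpx : p ∣ p ^ r := dvd_pow_self p (by omega)
  -- Step 1: reindex Zsum over the Tsum index set
  have hZ : Zsum p r s = ∑ k ∈ (Fintype.piFinset fun _ : Fin n => Finset.range (p ^ r)).filter
      (fun k => (∀ i, 0 < k i ∧ ¬ p ∣ k i) ∧ (∑ i, k i) < p ^ r ∧ ¬ p ∣ (∑ i, k i)),
      (∏ i, 1 / (k i : ℚ) ^ s i.castSucc) *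
        (1 / ((p ^ r - ∑ i, k i : ℕ) : ℚ) ^ (s (Fin.last n))) := by
    rw [Zsum]
    refine Finset.sum_nbij' (fun k i => k i.castSucc)
      (fun k => Fin.snoc k (p ^ r - ∑ i, k i)) ?_ ?_ ?_ ?_ ?_
    · intro k hk
      beta_reduce
      rw [Finset.mem_filter, Finset.Nat.mem_antidiagonalTuple] at hk
      obtain ⟨hsum, hcond⟩ := hk
      have hsum' : (∑ i : Fin n, k i.castSucc) + k (Fin.last n) = p ^ r := by
        rw [← Fin.sum_univ_castSucc]; exact hsum
      have hlast := hcond (Fin.last n)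
      have hKlt : (∑ i : Fin n, k i.castSucc) < p ^ r := by omega
      rw [Finset.mem_filter]
      refine ⟨?_, fun i => hcond i.castSucc, hKlt, ?_⟩
      · rw [Fintype.mem_piFinset]
        intro i
        rw [Finset.mem_range]
        calc k i.castSucc ≤ ∑ j : Fin n, k j.castSucc :=
              Finset.single_le_sum (f := fun j : Fin n => k j.castSucc)
                (fun _ _ => Nat.zero_le _) (Finset.mem_univ i)
          _ < p ^ r := hKlt
      · intro h
        have h2 : k (Fin.last n) = p ^ r - ∑ i : Fin n, k i.castSucc := by omega
        exact hlast.2 (by rw [h2]; exact Nat.dvd_sub hpx h)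
    · intro k hk
      beta_reduce
      rw [Finset.mem_filter] at hk
      obtain ⟨-, hcond, hKlt, hKnd⟩ := hk
      rw [Finset.mem_filter, Finset.Nat.mem_antidiagonalTuple]
      constructor
      · rw [Fin.sum_univ_castSucc]
        simp only [Fin.snoc_castSucc, Fin.snoc_last]
        omega
      · intro i
        induction i using Fin.lastCases with
        | last =>
          rw [Fin.snoc_last]
          refine ⟨by omega, fun h => hKnd ?_⟩
          have := Nat.dvd_sub hpx h
          rwa [Nat.sub_sub_self hKlt.le] at this
        | cast i =>
          rw [Fin.snoc_castSucc]
          exact hcond i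
    · intro k hk
      beta_reduce
      funext l
      induction l using Fin.lastCases with
      | last =>
        rw [Fin.snoc_last]
        rw [Finset.mem_filter, Finset.Nat.mem_antidiagonalTuple] at hk
        have hsum' : (∑ i : Fin n, k i.castSucc) + k (Fin.last n) = p ^ r := by
          rw [← Fin.sum_univ_castSucc]; exact hk.1
        omega
      | cast l => rw [Fin.snoc_castSucc]
    · intro k hk
      beta_reduce
      funext l
      rw [Fin.snoc_castSucc]
    · intro k hk
      rw [Finset.mem_filter, Finset.Nat.mem_antidiagonalTuple] at hk
      have hsum' : (∑ i : Fin n, k i.castSucc) + k (Fin.last n) = p ^ r := by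
        rw [← Fin.sum_univ_castSucc]; exact hk.1
      have hlast := hk.2 (Fin.last n)
      rw [Fin.prod_univ_castSucc]
      have h2 : k (Fin.last n) = p ^ r - ∑ i : Fin n, k i.castSucc := by omega
      rw [h2]
  -- Step 2: combine into a single sum
  have hsplit : Zsum p r s -
      (-1 : ℚ) ^ (s (Fin.last n)) *
        (Tsum p r (fun i : Fin n => s i.castSucc) (s (Fin.last n)) +
          (s (Fin.last n) : ℚ) * (p : ℚ) ^ r *
            Tsum p r (fun i : Fin n => s i.castSucc) (s (Fin.last n) + 1))
      = ∑ k ∈ (Fintype.piFinset fun _ : Fin n => Finset.range (p ^ r)).filter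
          (fun k => (∀ i, 0 < k i ∧ ¬ p ∣ k i) ∧ (∑ i, k i) < p ^ r ∧ ¬ p ∣ (∑ i, k i)),
        (∏ i, 1 / (k i : ℚ) ^ s i.castSucc) *
          (1 / ((p ^ r - ∑ i, k i : ℕ) : ℚ) ^ (s (Fin.last n)) -
            (-1 : ℚ) ^ (s (Fin.last n)) *
              (1 / ((∑ i, k i : ℕ) : ℚ) ^ (s (Fin.last n)) +
                ((s (Fin.last n) : ℕ) : ℚ) * (p : ℚ) ^ r *
                  (1 / ((∑ i, k i : ℕ) : ℚ) ^ (s (Fin.last n) + 1)))) := by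
    rw [hZ, Tsum, Tsum]
    simp only [Finset.mul_sum, ← Finset.sum_add_distrib, ← Finset.sum_sub_distrib]
    refine Finset.sum_congr rfl fun k hk => ?_
    ring
  rw [hsplit]
  refine padicNorm.sum_le' (fun k hk => ?_) (by positivity)
  rw [Finset.mem_filter] at hk
  obtain ⟨-, hcond, hKlt, hKnd⟩ := hk
  have hyp : ¬ p ∣ (p ^ r - ∑ i, k i) := by
    intro h
    have := Nat.dvd_sub hpx h
    rw [Nat.sub_sub_self hKlt.le] at this
    exact hKnd this
  have hP : padicNorm p (∏ i, 1 / (k i : ℚ) ^ s i.castSucc) = 1 := by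
    have hcast : (∏ i, 1 / (k i : ℚ) ^ s i.castSucc)
        = 1 / ((∏ i, k i ^ s i.castSucc : ℕ) : ℚ) := by
      push_cast
      rw [one_div, ← Finset.prod_inv_distrib]
      simp [one_div]
    have hnd : ¬ p ∣ ∏ i, k i ^ s i.castSucc := by
      intro h
      obtain ⟨i, -, hdvd⟩ := (Prime.dvd_finset_prod_iff hp.prime _).1 h
      exact (hcond i).2 (hp.dvd_of_dvd_pow hdvd)
    rw [hcast, padicNorm.div, padicNorm.one, (padicNorm.nat_eq_one_iff _).2 hnd, div_one]
  rw [padicNorm.mul, hP, one_mul]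
  exact term_bound p hKnd hKlt hyp (hs (Fin.last n))
end

section
/- Let p be a prime and α, β, γ positive integers with p > α+β+γ and α+β+γ odd. Then for every r ≥ 1, Z_{p^r}(α,β,γ) ≡ p^{r-1} Z_p(α,β,γ) (mod p^r), as a congruence of p-integral rational numbers. -/
open Finset
set_option linter.unusedSectionVars false
set_option linter.unusedTactic false
set_option linter.unreachableTactic false
set_option maxHeartbeats 1000000

namespace Stmt8

variable {p : ℕ} [hp : Fact p.Prime]

/-! ### p-adic norm helpers -/

lemma norm_add_le {x y ε : ℚ} (hx : padicNorm p x ≤ ε) (hy : padicNorm p y ≤ ε) :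
    padicNorm p (x + y) ≤ ε :=
  le_trans padicNorm.nonarchimedean (max_le hx hy)

lemma norm_sub_le {x y ε : ℚ} (hx : padicNorm p x ≤ ε) (hy : padicNorm p y ≤ ε) :
    padicNorm p (x - y) ≤ ε := by
  rw [sub_eq_add_neg]; exact norm_add_le hx (by rwa [padicNorm.neg])

lemma norm_pow (x : ℚ) (n : ℕ) : padicNorm p (x ^ n) = padicNorm p x ^ n := by
  induction n with
  | zero => simp [padicNorm.one]
  | succ n ih => rw [pow_succ, pow_succ, padicNorm.mul, ih]

lemma norm_nat_unit {a : ℕ} (ha : ¬ p ∣ a) : padicNorm p (a : ℚ) = 1 :=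
  (padicNorm.nat_eq_one_iff a).2 ha

lemma norm_int_unit {a : ℤ} (ha : ¬ (p : ℤ) ∣ a) : padicNorm p (a : ℚ) = 1 :=
  (padicNorm.int_eq_one_iff a).2 ha

lemma norm_q (r : ℕ) : padicNorm p ((p : ℚ) ^ r) = (p : ℚ) ^ (-(r : ℤ)) := by
  rw [norm_pow, padicNorm.padicNorm_p hp.out.one_lt]
  simp [zpow_neg, zpow_natCast, inv_pow]

lemma one_le_pQ : (1 : ℚ) ≤ (p : ℚ) := by exact_mod_cast hp.out.one_le

lemma zpow_neg_le {a b : ℤ} (h : a ≤ b) : (p : ℚ) ^ (-b) ≤ (p : ℚ) ^ (-a) :=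
  zpow_le_zpow_right₀ one_le_pQ (by omega)

lemma zpow_neg_le_one (a : ℕ) : (p : ℚ) ^ (-(a : ℤ)) ≤ 1 := by
  have := zpow_neg_le (p := p) (show (0 : ℤ) ≤ a by positivity)
  simpa using this

lemma nat_ne_zero_Q {a : ℕ} (ha : ¬ p ∣ a) : (a : ℚ) ≠ 0 := by
  intro h
  exact ha (by rw [show a = 0 by exact_mod_cast h]; exact dvd_zero _)

lemma norm_neg_one_pow_mul (n : ℕ) (z : ℚ) : padicNorm p ((-1) ^ n * z) = padicNorm p z := by
  rcases Nat.even_or_odd n with h | h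
  · rw [h.neg_one_pow, one_mul]
  · rw [h.neg_one_pow, neg_one_mul, padicNorm.neg]

lemma norm_nat_dvd_le {a : ℕ} (ha : p ∣ a) : padicNorm p (a : ℚ) ≤ (p : ℚ) ^ (-(1 : ℤ)) := by
  have : ((p ^ 1 : ℕ) : ℤ) ∣ (a : ℤ) := by simpa using Int.natCast_dvd_natCast.2 ha
  have := (padicNorm.dvd_iff_norm_le (p := p) (n := 1) (z := (a : ℤ))).1 this
  simpa using this

/-! ### polynomial expansion lemmas -/

lemma poly_aux (n : ℕ) (a t : ℤ) : ∃ g : ℤ, (a - n * t) * (a + t) ^ n = a ^ (n + 1) + t ^ 2 * g := by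
  induction n with
  | zero => exact ⟨0, by ring⟩
  | succ n ih =>
    obtain ⟨g, hg⟩ := ih
    refine ⟨a * g - (n + 1) * (a + t) ^ n, ?_⟩
    push_cast
    linear_combination a * hg

lemma expand_inv (n : ℕ) (a : ℕ) (ha : ¬ p ∣ a) (t : ℤ)
    (ht : ¬ (p : ℤ) ∣ ((a : ℤ) + t)) :
    padicNorm p (1 / ((a : ℚ) + (t : ℚ)) ^ n - ((a : ℚ) - n * t) / (a : ℚ) ^ (n + 1))
      ≤ padicNorm p (t : ℚ) ^ 2 := by
  obtain ⟨g, hg⟩ := poly_aux n a t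
  have ha' : ¬ (p : ℤ) ∣ (a : ℤ) := by exact_mod_cast ha
  have ha0 : (a : ℚ) ≠ 0 := nat_ne_zero_Q ha
  have hx0 : (a : ℚ) + (t : ℚ) ≠ 0 := by
    intro h; apply ht
    have : ((a : ℤ) + t : ℤ) = 0 := by exact_mod_cast h
    rw [this]; exact dvd_zero _
  have hgQ : ((a : ℚ) - n * t) * ((a : ℚ) + t) ^ n
      = (a : ℚ) ^ (n + 1) + (t : ℚ) ^ 2 * g := by exact_mod_cast congrArg (Int.cast : ℤ → ℚ) hg
  have hXn : ((a : ℚ) + (t : ℚ)) ^ n ≠ 0 := pow_ne_zero _ hx0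
  have ha1 : (a : ℚ) ^ (n + 1) ≠ 0 := pow_ne_zero _ ha0
  have key : 1 / ((a : ℚ) + (t : ℚ)) ^ n - ((a : ℚ) - n * t) / (a : ℚ) ^ (n + 1)
      = (1 * (a : ℚ) ^ (n + 1) - ((a : ℚ) + (t : ℚ)) ^ n * ((a : ℚ) - n * t))
        / (((a : ℚ) + (t : ℚ)) ^ n * (a : ℚ) ^ (n + 1)) := div_sub_div _ _ hXn ha1
  have num : 1 * (a : ℚ) ^ (n + 1) - ((a : ℚ) + (t : ℚ)) ^ n * ((a : ℚ) - n * t)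
      = -((t : ℚ) ^ 2 * (g : ℚ)) := by linear_combination -hgQ
  have hX1 : padicNorm p ((a : ℚ) + (t : ℚ)) = 1 := by
    rw [show ((a : ℚ) + (t : ℚ)) = (((a : ℤ) + t : ℤ) : ℚ) by push_cast; ring]
    exact norm_int_unit ht
  rw [key, num]
  simp only [padicNorm.div, padicNorm.neg, padicNorm.mul, norm_pow, hX1, norm_nat_unit ha]
  simp only [one_pow, mul_one, div_one]
  calc padicNorm p ((t : ℚ)) ^ 2 * padicNorm p (g : ℚ) ≤ padicNorm p ((t : ℚ)) ^ 2 * 1 := by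
        gcongr
        exact padicNorm.of_int g
    _ = padicNorm p ((t : ℚ)) ^ 2 := by ring

lemma triple_model {c1 c2 c3 a1 a2 a3 : ℕ} (h1 : ¬ p ∣ a1) (h2 : ¬ p ∣ a2) (h3 : ¬ p ∣ a3)
    (t1 t2 t3 : ℤ) {δ : ℚ} (hδ1 : δ ≤ 1)
    (ht1 : padicNorm p (t1 : ℚ) ≤ δ) (ht2 : padicNorm p (t2 : ℚ) ≤ δ)
    (ht3 : padicNorm p (t3 : ℚ) ≤ δ) :
    padicNorm p (((a1 : ℚ) - c1 * t1) / (a1 : ℚ) ^ (c1 + 1)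
        * (((a2 : ℚ) - c2 * t2) / (a2 : ℚ) ^ (c2 + 1))
        * (((a3 : ℚ) - c3 * t3) / (a3 : ℚ) ^ (c3 + 1))
      - 1 / ((a1 : ℚ) ^ c1 * (a2 : ℚ) ^ c2 * (a3 : ℚ) ^ c3)
        * (1 - ((c1 : ℚ) * t1 / a1 + (c2 : ℚ) * t2 / a2 + (c3 : ℚ) * t3 / a3))) ≤ δ ^ 2 := by
  have ha1 := nat_ne_zero_Q h1
  have ha2 := nat_ne_zero_Q h2
  have ha3 := nat_ne_zero_Q h3
  have hδ0 : 0 ≤ δ := le_trans (padicNorm.nonneg _) ht1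
  set D : ℚ := (a1 : ℚ) ^ (c1 + 1) * (a2 : ℚ) ^ (c2 + 1) * (a3 : ℚ) ^ (c3 + 1) with hDdef
  have hD : padicNorm p D = 1 := by
    rw [hDdef, padicNorm.mul, padicNorm.mul, norm_pow, norm_pow, norm_pow,
      norm_nat_unit h1, norm_nat_unit h2, norm_nat_unit h3]
    simp
  have key : ((a1 : ℚ) - c1 * t1) / (a1 : ℚ) ^ (c1 + 1)
        * (((a2 : ℚ) - c2 * t2) / (a2 : ℚ) ^ (c2 + 1))
        * (((a3 : ℚ) - c3 * t3) / (a3 : ℚ) ^ (c3 + 1))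
      - 1 / ((a1 : ℚ) ^ c1 * (a2 : ℚ) ^ c2 * (a3 : ℚ) ^ c3)
        * (1 - ((c1 : ℚ) * t1 / a1 + (c2 : ℚ) * t2 / a2 + (c3 : ℚ) * t3 / a3))
      = (t1 : ℚ) * t2 * (((c1 * c2 : ℕ) : ℚ) * a3 / D)
        + ((t1 : ℚ) * t3 * (((c1 * c3 : ℕ) : ℚ) * a2 / D)
        + ((t2 : ℚ) * t3 * (((c2 * c3 : ℕ) : ℚ) * a1 / D)
        + (t1 : ℚ) * t2 * t3 * (-((c1 * c2 * c3 : ℕ) : ℚ) / D))) := by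
    rw [hDdef]
    push_cast
    field_simp
    ring
  rw [key]
  have hsmall : ∀ (u v : ℤ) (x : ℚ), padicNorm p (u : ℚ) ≤ δ → padicNorm p (v : ℚ) ≤ δ →
      padicNorm p x ≤ 1 → padicNorm p ((u : ℚ) * v * x) ≤ δ ^ 2 := by
    intro u v x hu hv hx
    rw [padicNorm.mul, padicNorm.mul, pow_two]
    calc padicNorm p (u : ℚ) * padicNorm p (v : ℚ) * padicNorm p x
        ≤ δ * δ * 1 := by
          gcongr <;> first | exact padicNorm.nonneg _ | assumption
      _ = δ * δ := by ring
  have hfrac : ∀ (m : ℚ), padicNorm p m ≤ 1 → padicNorm p (m / D) ≤ 1 := by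
    intro m hm
    rw [padicNorm.div, hD, div_one]; exact hm
  have b1 : padicNorm p ((t1 : ℚ) * t2 * (((c1 * c2 : ℕ) : ℚ) * a3 / D)) ≤ δ ^ 2 := by
    refine hsmall _ _ _ ht1 ht2 (hfrac _ ?_)
    rw [show ((c1 * c2 : ℕ) : ℚ) * a3 = ((c1 * c2 * a3 : ℕ) : ℚ) by push_cast; ring]
    exact padicNorm.of_nat _
  have b2 : padicNorm p ((t1 : ℚ) * t3 * (((c1 * c3 : ℕ) : ℚ) * a2 / D)) ≤ δ ^ 2 := by
    refine hsmall _ _ _ ht1 ht3 (hfrac _ ?_)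
    rw [show ((c1 * c3 : ℕ) : ℚ) * a2 = ((c1 * c3 * a2 : ℕ) : ℚ) by push_cast; ring]
    exact padicNorm.of_nat _
  have b3 : padicNorm p ((t2 : ℚ) * t3 * (((c2 * c3 : ℕ) : ℚ) * a1 / D)) ≤ δ ^ 2 := by
    refine hsmall _ _ _ ht2 ht3 (hfrac _ ?_)
    rw [show ((c2 * c3 : ℕ) : ℚ) * a1 = ((c2 * c3 * a1 : ℕ) : ℚ) by push_cast; ring]
    exact padicNorm.of_nat _
  have b4 : padicNorm p ((t1 : ℚ) * t2 * t3 * (-((c1 * c2 * c3 : ℕ) : ℚ) / D)) ≤ δ ^ 2 := by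
    rw [show (t1 : ℚ) * t2 * t3 * (-((c1 * c2 * c3 : ℕ) : ℚ) / D)
      = (t1 : ℚ) * t2 * ((t3 : ℚ) * (-((c1 * c2 * c3 : ℕ) : ℚ) / D)) by ring]
    refine hsmall _ _ _ ht1 ht2 ?_
    rw [padicNorm.mul]
    calc padicNorm p (t3 : ℚ) * padicNorm p (-((c1 * c2 * c3 : ℕ) : ℚ) / D)
        ≤ 1 * 1 := by
          gcongr
          all_goals first
            | exact padicNorm.nonneg _
            | exact le_trans ht3 hδ1
            | (refine hfrac _ ?_; rw [padicNorm.neg]; exact padicNorm.of_nat _)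
      _ = 1 := by ring
  exact norm_add_le b1 (norm_add_le b2 (norm_add_le b3 b4))

lemma triple_diff {x1 x2 x3 y1 y2 y3 ε : ℚ}
    (hx2 : padicNorm p x2 ≤ 1) (hx3 : padicNorm p x3 ≤ 1)
    (hy1 : padicNorm p y1 ≤ 1) (hy2 : padicNorm p y2 ≤ 1)
    (h1 : padicNorm p (x1 - y1) ≤ ε) (h2 : padicNorm p (x2 - y2) ≤ ε)
    (h3 : padicNorm p (x3 - y3) ≤ ε) :
    padicNorm p (x1 * x2 * x3 - y1 * y2 * y3) ≤ ε := by
  have key : x1 * x2 * x3 - y1 * y2 * y3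
      = (x1 - y1) * x2 * x3 + (y1 * (x2 - y2) * x3 + y1 * y2 * (x3 - y3)) := by ring
  rw [key]
  have hb : ∀ u v w : ℚ, padicNorm p u ≤ ε → padicNorm p v ≤ 1 → padicNorm p w ≤ 1 →
      padicNorm p (u * v * w) ≤ ε := by
    intro u v w hu hv hw
    have hε0 : 0 ≤ ε := le_trans (padicNorm.nonneg _) hu
    rw [padicNorm.mul, padicNorm.mul]
    calc padicNorm p u * padicNorm p v * padicNorm p w ≤ ε * 1 * 1 := by
          gcongr <;> first | exact padicNorm.nonneg _ | assumption
      _ = ε := by ring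
  refine norm_add_le (hb _ _ _ h1 hx2 hx3) (norm_add_le ?_ ?_)
  · rw [show y1 * (x2 - y2) * x3 = (x2 - y2) * y1 * x3 by ring]
    exact hb _ _ _ h2 hy1 hx3
  · rw [show y1 * y2 * (x3 - y3) = (x3 - y3) * y1 * y2 by ring]
    exact hb _ _ _ h3 hy1 hy2


/-! ### index sets and decomposition -/

def S (p N : ℕ) : Finset (ℕ × ℕ × ℕ) :=
  (Finset.range (N + 1) ×ˢ Finset.range (N + 1) ×ˢ Finset.range (N + 1)).filter
    (fun k : ℕ × ℕ × ℕ => k.1 + k.2.1 + k.2.2 = N ∧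
      0 < k.1 ∧ ¬ p ∣ k.1 ∧ 0 < k.2.1 ∧ ¬ p ∣ k.2.1 ∧ 0 < k.2.2 ∧ ¬ p ∣ k.2.2)

def A (p q m : ℕ) : Finset (ℕ × ℕ × ℕ) :=
  (Finset.range (q + 1) ×ˢ Finset.range (q + 1) ×ˢ Finset.range (q + 1)).filter
    (fun a : ℕ × ℕ × ℕ => a.1 + a.2.1 + a.2.2 = m * q ∧
      0 < a.1 ∧ ¬ p ∣ a.1 ∧ 0 < a.2.1 ∧ ¬ p ∣ a.2.1 ∧ 0 < a.2.2 ∧ ¬ p ∣ a.2.2)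

def T (p m : ℕ) : Finset (ℕ × ℕ × ℕ) :=
  (range p ×ˢ range p ×ˢ range p).filter
    (fun s : ℕ × ℕ × ℕ => s.1 + s.2.1 + s.2.2 = p - m)

def φm (q : ℕ) (x : (ℕ × ℕ × ℕ) × (ℕ × ℕ × ℕ)) : ℕ × ℕ × ℕ :=
  (x.1.1 + q * x.2.1, x.1.2.1 + q * x.2.2.1, x.1.2.2 + q * x.2.2.2)

def ψm (q : ℕ) (k : ℕ × ℕ × ℕ) : (ℕ × ℕ × ℕ) × (ℕ × ℕ × ℕ) :=
  (((k.1 - 1) % q + 1, (k.2.1 - 1) % q + 1, (k.2.2 - 1) % q + 1),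
   ((k.1 - 1) / q, (k.2.1 - 1) / q, (k.2.2 - 1) / q))

lemma A1_eq (p q : ℕ) : A p q 1 = S p q := by
  unfold A S; simp

lemma coord_decomp {p q k : ℕ} (hq : 2 ≤ q) (hpq : p ∣ q) (hk1 : 0 < k) (hk2 : k ≤ p * q)
    (hk3 : ¬ p ∣ k) :
    0 < (k - 1) % q + 1 ∧ (k - 1) % q + 1 ≤ q ∧ ¬ p ∣ ((k - 1) % q + 1) ∧
      (k - 1) / q < p ∧ k = ((k - 1) % q + 1) + q * ((k - 1) / q) := by
  have h0 : 0 < q := by omega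
  have hmod : (k - 1) % q < q := Nat.mod_lt _ h0
  have hdm : q * ((k - 1) / q) + (k - 1) % q = k - 1 := Nat.div_add_mod (k - 1) q
  have hk : k = ((k - 1) % q + 1) + q * ((k - 1) / q) := by omega
  refine ⟨by omega, by omega, ?_, ?_, hk⟩
  · intro hdvd
    apply hk3
    rw [hk]
    exact Nat.dvd_add hdvd (Dvd.dvd.mul_right hpq _)
  · by_contra h
    push_neg at h
    have h2 : q * p ≤ q * ((k - 1) / q) := Nat.mul_le_mul_left q h
    have h3 : q * p = p * q := Nat.mul_comm q p
    omega

lemma decompose (p q : ℕ) (hq : 2 ≤ q) (hp2 : 2 ≤ p) (hpq : p ∣ q) (g : ℕ × ℕ × ℕ → ℚ) :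
    ∑ k ∈ S p (p * q), g k
      = ∑ x ∈ (A p q 1 ×ˢ T p 1) ∪ (A p q 2 ×ˢ T p 2), g (φm q x) := by
  have hqp : q * p = p * q := Nat.mul_comm q p
  have hphipsi : ∀ k ∈ S p (p * q), φm q (ψm q k) = k := by
    rintro ⟨k1, k2, k3⟩ hk
    simp only [S, mem_filter, mem_product, mem_range] at hk
    obtain ⟨⟨hr1, hr2, hr3⟩, hsum, h11, h12, h21, h22, h31, h32⟩ := hk
    obtain ⟨_, _, _, _, he1⟩ := coord_decomp hq hpq h11 (by omega) h12
    obtain ⟨_, _, _, _, he2⟩ := coord_decomp hq hpq h21 (by omega) h22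
    obtain ⟨_, _, _, _, he3⟩ := coord_decomp hq hpq h31 (by omega) h32
    simp only [φm, ψm, Prod.mk.injEq]
    exact ⟨by omega, by omega, by omega⟩
  apply Finset.sum_nbij' (i := ψm q) (j := φm q)
  · -- ψ maps into union
    rintro ⟨k1, k2, k3⟩ hk
    simp only [S, mem_filter, mem_product, mem_range] at hk
    obtain ⟨⟨hr1, hr2, hr3⟩, hsum, h11, h12, h21, h22, h31, h32⟩ := hk
    obtain ⟨ha1, ha1', hd1, hs1, he1⟩ := coord_decomp hq hpq h11 (by omega) h12
    obtain ⟨ha2, ha2', hd2, hs2, he2⟩ := coord_decomp hq hpq h21 (by omega) h22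
    obtain ⟨ha3, ha3', hd3, hs3, he3⟩ := coord_decomp hq hpq h31 (by omega) h32
    set a1 := (k1 - 1) % q + 1; set a2 := (k2 - 1) % q + 1; set a3 := (k3 - 1) % q + 1
    set s1 := (k1 - 1) / q; set s2 := (k2 - 1) / q; set s3 := (k3 - 1) / q
    have hsum' : a1 + a2 + a3 + (q * s1 + q * s2 + q * s3) = p * q := by omega
    have hqd : q ∣ a1 + a2 + a3 := by
      have h1 : q ∣ a1 + a2 + a3 + (q * s1 + q * s2 + q * s3) := by
        rw [hsum']; exact Dvd.dvd.mul_left dvd_rfl p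
      have h2 : q ∣ q * s1 + q * s2 + q * s3 :=
        Dvd.dvd.add (Dvd.dvd.add (Dvd.intro _ rfl) (Dvd.intro _ rfl)) (Dvd.intro _ rfl)
      exact (Nat.dvd_add_iff_left h2).2 h1
    obtain ⟨m, hm⟩ := hqd
    have hm3 : m = 1 ∨ m = 2 := by
      have hub : a1 + a2 + a3 ≤ 3 * q := by omega
      have hlb : 0 < a1 + a2 + a3 := by omega
      rcases Nat.lt_or_ge m 3 with h | h
      · interval_cases m <;> omega
      · exfalso
        have h3 : q * 3 ≤ q * m := Nat.mul_le_mul_left q h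
        have hq1 : a1 = q := by omega
        exact hd1 (hq1 ▸ hpq)
    have hc : m + (s1 + s2 + s3) = p := by
      apply Nat.eq_of_mul_eq_mul_left (show 0 < q by omega)
      rw [Nat.mul_add, Nat.mul_add, Nat.mul_add]
      omega
    simp only [Finset.mem_union, Finset.mem_product, A, T, mem_filter, mem_product, mem_range, ψm]
    rcases hm3 with h | h
    · subst h; left
      exact ⟨⟨⟨by omega, by omega, by omega⟩, by omega, ha1, hd1, ha2, hd2, ha3, hd3⟩,
        ⟨by omega, by omega, by omega⟩, by omega⟩
    · subst h; right
      exact ⟨⟨⟨by omega, by omega, by omega⟩, by omega, ha1, hd1, ha2, hd2, ha3, hd3⟩,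
        ⟨by omega, by omega, by omega⟩, by omega⟩
  · -- φ maps back into S
    rintro ⟨⟨a1, a2, a3⟩, s1, s2, s3⟩ hx
    simp only [Finset.mem_union, Finset.mem_product, A, T, mem_filter, mem_product,
      mem_range] at hx
    simp only [S, mem_filter, mem_product, mem_range, φm]
    have hpq' : ∀ u s : ℕ, 0 < u → ¬ p ∣ u → ¬ p ∣ (u + q * s) := by
      intro u s hu hnd hdvd
      exact hnd ((Nat.dvd_add_iff_left (Dvd.dvd.mul_right hpq s)).2 hdvd)
    have hb : ∀ s : ℕ, s < p → q * s + q ≤ q * p := by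
      intro s hs
      have := Nat.mul_le_mul_left q (show s + 1 ≤ p by omega)
      rw [Nat.mul_add] at this
      omega
    rcases hx with ⟨⟨⟨hx1, hx2, hx3⟩, hsa, h11, h12, h21, h22, h31, h32⟩, ⟨hs1, hs2, hs3⟩, hss⟩ |
      ⟨⟨⟨hx1, hx2, hx3⟩, hsa, h11, h12, h21, h22, h31, h32⟩, ⟨hs1, hs2, hs3⟩, hss⟩
    · have hqsum : q * (s1 + s2 + s3 + 1) = q * p := by rw [show s1+s2+s3+1 = p from by omega]
      rw [Nat.mul_add, Nat.mul_add, Nat.mul_add] at hqsum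
      exact ⟨⟨by have := hb s1 hs1; omega, by have := hb s2 hs2; omega,
        by have := hb s3 hs3; omega⟩, by omega, by omega, hpq' _ _ h11 h12,
        by omega, hpq' _ _ h21 h22, by omega, hpq' _ _ h31 h32⟩
    · have hqsum : q * (s1 + s2 + s3 + 2) = q * p := by rw [show s1+s2+s3+2 = p from by omega]
      rw [Nat.mul_add, Nat.mul_add, Nat.mul_add] at hqsum
      exact ⟨⟨by have := hb s1 hs1; omega, by have := hb s2 hs2; omega,
        by have := hb s3 hs3; omega⟩, by omega, by omega, hpq' _ _ h11 h12,
        by omega, hpq' _ _ h21 h22, by omega, hpq' _ _ h31 h32⟩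
  · -- φ ∘ ψ = id on S
    exact hphipsi
  · -- ψ ∘ φ = id on union
    rintro ⟨⟨a1, a2, a3⟩, s1, s2, s3⟩ hx
    have key : ∀ u s : ℕ, 0 < u → u ≤ q → ¬ p ∣ u → s < p →
        ((u + q * s - 1) % q + 1 = u ∧ (u + q * s - 1) / q = s) := by
      intro u s hu huq hnd hsp
      have hlt : u < q := by
        rcases Nat.lt_or_ge u q with h | h
        · exact h
        · exfalso; exact hnd (by rw [show u = q by omega]; exact hpq)
      have h1 : u + q * s - 1 = (u - 1) + s * q := by rw [Nat.mul_comm]; omega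
      constructor
      · rw [h1, Nat.add_mul_mod_self_right, Nat.mod_eq_of_lt (by omega)]; omega
      · rw [h1, Nat.add_mul_div_right _ _ (by omega), Nat.div_eq_of_lt (by omega)]; omega
    have h1 : ∀ m : ℕ, (⟨⟨a1,a2,a3⟩,(s1,s2,s3)⟩ : (ℕ×ℕ×ℕ)×(ℕ×ℕ×ℕ)) ∈ A p q m ×ˢ T p m →
        ψm q (φm q ⟨⟨a1,a2,a3⟩,(s1,s2,s3)⟩) = ⟨⟨a1,a2,a3⟩,(s1,s2,s3)⟩ := by
      intro m hmem
      simp only [Finset.mem_product, A, T, mem_filter, mem_product, mem_range] at hmem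
      obtain ⟨⟨⟨hx1, hx2, hx3⟩, hsa, h11, h12, h21, h22, h31, h32⟩, ⟨hs1, hs2, hs3⟩, hss⟩ := hmem
      obtain ⟨e1a, e1s⟩ := key a1 s1 h11 (by omega) h12 hs1
      obtain ⟨e2a, e2s⟩ := key a2 s2 h21 (by omega) h22 hs2
      obtain ⟨e3a, e3s⟩ := key a3 s3 h31 (by omega) h32 hs3
      simp only [ψm, φm]
      rw [e1a, e1s, e2a, e2s, e3a, e3s]
    rcases Finset.mem_union.1 hx with h | h
    · exact h1 1 h
    · exact h1 2 h
  · exact fun k hk => (congrArg g (hphipsi k hk)).symm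


/-! ### counting -/

lemma gauss (k : ℕ) : (∑ i ∈ range k, (k - i)) * 2 = k * (k + 1) := by
  induction k with
  | zero => simp
  | succ k ih =>
    rw [Finset.sum_range_succ']
    simp only [show ∀ i, k + 1 - (i + 1) = k - i from fun i => by omega, Nat.sub_zero]
    calc (∑ i ∈ range k, (k - i) + (k + 1)) * 2
        = (∑ i ∈ range k, (k - i)) * 2 + (k + 1) * 2 := by ring
      _ = k * (k + 1) + (k + 1) * 2 := by rw [ih]
      _ = (k + 1) * (k + 2) := by ring

lemma count_aux (P n : ℕ) (hn : n < P) :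
    (((range P ×ˢ range P ×ˢ range P).filter
      (fun s : ℕ × ℕ × ℕ => s.1 + s.2.1 + s.2.2 = n)).card) * 2 = (n + 1) * (n + 2) := by
  have hcard : ((range P ×ˢ range P ×ˢ range P).filter
      (fun s : ℕ × ℕ × ℕ => s.1 + s.2.1 + s.2.2 = n)).card
      = ((range (n + 1)).sigma (fun s1 => range (n + 1 - s1))).card := by
    apply Finset.card_bij (fun s _ => (⟨s.1, s.2.1⟩ : Σ _ : ℕ, ℕ))
    · intro s hs
      simp only [mem_filter, mem_product, mem_range] at hs
      simp only [Finset.mem_sigma, mem_range]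
      omega
    · intro s1 hs1 s2 hs2 h
      simp only [mem_filter, mem_product, mem_range] at hs1 hs2
      simp only [Sigma.mk.inj_iff, heq_eq_eq] at h
      obtain ⟨h1, h2⟩ := h
      ext <;> omega
    · intro x hx
      simp only [Finset.mem_sigma, mem_range] at hx
      refine ⟨(x.1, x.2, n - x.1 - x.2), ?_, ?_⟩
      · simp only [mem_filter, mem_product, mem_range]
        omega
      · rfl
  rw [hcard, Finset.card_sigma]
  simp only [Finset.card_range]
  exact gauss (n + 1)

lemma sig_symm (P n : ℕ) (f : ℕ × ℕ × ℕ → ℕ × ℕ × ℕ)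
    (hinv : ∀ s, f (f s) = s)
    (hsum : ∀ s : ℕ × ℕ × ℕ, (f s).1 + (f s).2.1 + (f s).2.2 = s.1 + s.2.1 + s.2.2)
    (hmem : ∀ s : ℕ × ℕ × ℕ, ((f s).1 < P ∧ (f s).2.1 < P ∧ (f s).2.2 < P) ↔
      (s.1 < P ∧ s.2.1 < P ∧ s.2.2 < P)) (g : ℕ × ℕ × ℕ → ℕ) :
    ∑ s ∈ (range P ×ˢ range P ×ˢ range P).filter
        (fun s : ℕ × ℕ × ℕ => s.1 + s.2.1 + s.2.2 = n), g (f s)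
    = ∑ s ∈ (range P ×ˢ range P ×ˢ range P).filter
        (fun s : ℕ × ℕ × ℕ => s.1 + s.2.1 + s.2.2 = n), g s := by
  apply Finset.sum_nbij' (i := f) (j := f)
  · intro s hs
    simp only [mem_filter, mem_product, mem_range] at hs ⊢
    rw [hsum]
    exact ⟨by rw [show ((f s).1 < P ∧ (f s).2.1 < P ∧ (f s).2.2 < P) ↔ _ from hmem s]; tauto,
      hs.2⟩
  · intro s hs
    simp only [mem_filter, mem_product, mem_range] at hs ⊢
    constructor
    · rw [show ((f s).1 < P ∧ (f s).2.1 < P ∧ (f s).2.2 < P) ↔ _ from hmem s]; tauto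
    · rw [hsum]; exact hs.2
  · intro s _; exact hinv s
  · intro s _; exact hinv s
  · intro s _; rfl

lemma cardT {p : ℕ} (m : ℕ) (hm : 1 ≤ m) (hm2 : m ≤ 2) (hp : 2 < p) :
    (T p m).card * 2 = (p + 1 - m) * (p + 2 - m) := by
  have := count_aux p (p - m) (by omega)
  rw [show p - m + 1 = p + 1 - m by omega, show p - m + 2 = p + 2 - m by omega] at this
  exact this

lemma dvd_cardT {p : ℕ} (hp : p.Prime) (hp3 : 3 < p) (m : ℕ) (hm : 1 ≤ m) (hm2 : m ≤ 2) :
    p ∣ (T p m).card := by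
  have h2 := cardT (p := p) m hm hm2 (by omega)
  have hpd : p ∣ (T p m).card * 2 := by
    rw [h2]
    interval_cases m
    · rw [show p + 1 - 1 = p by omega]; exact Dvd.dvd.mul_right dvd_rfl _
    · rw [show p + 2 - 2 = p by omega]; exact Dvd.dvd.mul_left dvd_rfl _
  have hcop : p.Coprime 2 := (Nat.coprime_primes hp Nat.prime_two).2 (by omega)
  exact hcop.dvd_of_dvd_mul_right hpd

lemma sigma_eq {p m : ℕ} :
    (∑ s ∈ T p m, s.1) = (∑ s ∈ T p m, s.2.1) ∧ (∑ s ∈ T p m, s.1) = (∑ s ∈ T p m, s.2.2) := by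
  constructor
  · have := sig_symm p (p - m) (fun s => (s.2.1, s.1, s.2.2)) (fun s => rfl)
      (fun s => by simp; omega) (fun s => by simp; tauto) (fun s => s.1)
    exact (this).symm
  · have := sig_symm p (p - m) (fun s => (s.2.2, s.2.1, s.1)) (fun s => rfl)
      (fun s => by simp; omega) (fun s => by simp; tauto) (fun s => s.1)
    exact (this).symm

lemma dvd_sigma {p : ℕ} (hp : p.Prime) (hp3 : 3 < p) (m : ℕ) (hm : 1 ≤ m) (hm2 : m ≤ 2) :
    p ∣ (∑ s ∈ T p m, s.1) ∧ p ∣ (∑ s ∈ T p m, s.2.1) ∧ p ∣ (∑ s ∈ T p m, s.2.2) := by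
  obtain ⟨h12, h13⟩ := sigma_eq (p := p) (m := m)
  have hsum : (∑ s ∈ T p m, s.1) * 3 = (T p m).card * (p - m) := by
    have : (∑ s ∈ T p m, s.1) + (∑ s ∈ T p m, s.2.1) + (∑ s ∈ T p m, s.2.2)
        = ∑ s ∈ T p m, (s.1 + s.2.1 + s.2.2) := by
      rw [← Finset.sum_add_distrib, ← Finset.sum_add_distrib]
    have h2 : ∑ s ∈ T p m, (s.1 + s.2.1 + s.2.2) = (T p m).card * (p - m) := by
      have h2a : ∑ s ∈ T p m, (s.1 + s.2.1 + s.2.2) = ∑ _s ∈ T p m, (p - m) :=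
        Finset.sum_congr rfl (fun s hs => (Finset.mem_filter.1 hs).2)
      rw [h2a, Finset.sum_const, smul_eq_mul]
    omega
  have hdvd3 : p ∣ (∑ s ∈ T p m, s.1) * 3 := by
    rw [hsum]; exact Dvd.dvd.mul_right (dvd_cardT hp hp3 m hm hm2) _
  have hcop : p.Coprime 3 := (Nat.coprime_primes hp Nat.prime_three).2 (by omega)
  have h1 : p ∣ (∑ s ∈ T p m, s.1) := hcop.dvd_of_dvd_mul_right hdvd3
  exact ⟨h1, h12 ▸ h1, h13 ▸ h1⟩


/-! ### summand function -/

def Ff (α β γ : ℕ) (k : ℕ × ℕ × ℕ) : ℚ :=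
  1 / ((k.1 : ℚ) ^ α * (k.2.1 : ℚ) ^ β * (k.2.2 : ℚ) ^ γ)

lemma Ff_split (α β γ : ℕ) (k : ℕ × ℕ × ℕ) :
    Ff α β γ k = (1 / (k.1 : ℚ) ^ α) * (1 / (k.2.1 : ℚ) ^ β) * (1 / (k.2.2 : ℚ) ^ γ) := by
  unfold Ff
  rw [one_div, one_div, one_div, one_div, mul_inv, mul_inv]

lemma norm_Ff {α β γ : ℕ} {k : ℕ × ℕ × ℕ} (h1 : ¬ p ∣ k.1) (h2 : ¬ p ∣ k.2.1)
    (h3 : ¬ p ∣ k.2.2) : padicNorm p (Ff α β γ k) = 1 := by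
  unfold Ff
  rw [padicNorm.div, padicNorm.mul, padicNorm.mul, norm_pow, norm_pow, norm_pow,
    norm_nat_unit h1, norm_nat_unit h2, norm_nat_unit h3, padicNorm.one]
  simp

lemma norm_inv_unit_pow {a c : ℕ} (ha : ¬ p ∣ a) : padicNorm p (1 / (a : ℚ) ^ c) = 1 := by
  rw [padicNorm.div, norm_pow, norm_nat_unit ha, padicNorm.one]
  simp

lemma norm_y_le_one {a c : ℕ} (ha : ¬ p ∣ a) (t : ℤ) :
    padicNorm p (((a : ℚ) - (c : ℚ) * (t : ℚ)) / (a : ℚ) ^ (c + 1)) ≤ 1 := by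
  rw [padicNorm.div, norm_pow, norm_nat_unit ha]
  simp only [one_pow, div_one]
  rw [show (a : ℚ) - (c : ℚ) * (t : ℚ) = (((a : ℤ) - (c : ℤ) * t : ℤ) : ℚ) by push_cast; ring]
  exact padicNorm.of_int _

lemma stepA (α β γ q : ℕ) (hq : p ∣ q) {δ : ℚ} (hδ : padicNorm p (q : ℚ) ≤ δ) (hδ1 : δ ≤ 1)
    (a1 a2 a3 s1 s2 s3 : ℕ) (hd1 : ¬ p ∣ a1) (hd2 : ¬ p ∣ a2) (hd3 : ¬ p ∣ a3)
    (hk1 : ¬ p ∣ (a1 + q * s1)) (hk2 : ¬ p ∣ (a2 + q * s2)) (hk3 : ¬ p ∣ (a3 + q * s3)) :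
    padicNorm p (Ff α β γ (a1 + q * s1, a2 + q * s2, a3 + q * s3)
      - Ff α β γ (a1, a2, a3) * (1 - ((α : ℚ) * ((q * s1 : ℕ) : ℚ) / (a1 : ℚ)
        + (β : ℚ) * ((q * s2 : ℕ) : ℚ) / (a2 : ℚ)
        + (γ : ℚ) * ((q * s3 : ℕ) : ℚ) / (a3 : ℚ)))) ≤ δ ^ 2 := by
  have hδ0 : 0 ≤ δ := le_trans (padicNorm.nonneg _) hδ
  have hts : ∀ s : ℕ, padicNorm p (((q * s : ℕ) : ℤ) : ℚ) ≤ δ := by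
    intro s
    rw [show (((q * s : ℕ) : ℤ) : ℚ) = (q : ℚ) * (s : ℚ) by push_cast; ring, padicNorm.mul]
    calc padicNorm p (q : ℚ) * padicNorm p (s : ℚ) ≤ δ * 1 := by
          gcongr <;> first | exact padicNorm.nonneg _ | exact hδ | exact padicNorm.of_nat _
      _ = δ := by ring
  -- coordinate expansions
  have hsq : ∀ (c a s : ℕ), ¬ p ∣ a → ¬ p ∣ (a + q * s) →
      padicNorm p (1 / (((a + q * s : ℕ)) : ℚ) ^ c
        - ((a : ℚ) - (c : ℚ) * (((q * s : ℕ) : ℤ) : ℚ)) / (a : ℚ) ^ (c + 1)) ≤ δ ^ 2 := by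
    intro c a s hda hdk
    have h := expand_inv c a hda ((q * s : ℕ) : ℤ) (by exact_mod_cast hdk)
    have e : ((a : ℚ) + ((((q * s : ℕ)) : ℤ) : ℚ)) = (((a + q * s : ℕ)) : ℚ) := by push_cast; ring
    rw [e] at h
    calc padicNorm p _ ≤ padicNorm p ((((q * s : ℕ) : ℤ)) : ℚ) ^ 2 := h
      _ ≤ δ ^ 2 := by gcongr <;> first | exact padicNorm.nonneg _ | exact hts s
  have tm := triple_model (p := p) (c1 := α) (c2 := β) (c3 := γ) hd1 hd2 hd3
    ((q * s1 : ℕ) : ℤ) ((q * s2 : ℕ) : ℤ) ((q * s3 : ℕ) : ℤ) hδ1 (hts s1) (hts s2) (hts s3)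
  have td : padicNorm p ((1 / (((a1 + q * s1 : ℕ)) : ℚ) ^ α) * (1 / (((a2 + q * s2 : ℕ)) : ℚ) ^ β)
        * (1 / (((a3 + q * s3 : ℕ)) : ℚ) ^ γ)
      - ((a1 : ℚ) - (α : ℚ) * (((q * s1 : ℕ) : ℤ) : ℚ)) / (a1 : ℚ) ^ (α + 1)
        * (((a2 : ℚ) - (β : ℚ) * (((q * s2 : ℕ) : ℤ) : ℚ)) / (a2 : ℚ) ^ (β + 1))
        * (((a3 : ℚ) - (γ : ℚ) * (((q * s3 : ℕ) : ℤ) : ℚ)) / (a3 : ℚ) ^ (γ + 1))) ≤ δ ^ 2 := by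
    apply triple_diff (norm_inv_unit_pow hk2).le (norm_inv_unit_pow hk3).le
      (norm_y_le_one hd1 _) (norm_y_le_one hd2 _)
      (hsq α a1 s1 hd1 hk1) (hsq β a2 s2 hd2 hk2) (hsq γ a3 s3 hd3 hk3)
  have efinal : Ff α β γ (a1 + q * s1, a2 + q * s2, a3 + q * s3)
      - Ff α β γ (a1, a2, a3) * (1 - ((α : ℚ) * ((q * s1 : ℕ) : ℚ) / (a1 : ℚ)
        + (β : ℚ) * ((q * s2 : ℕ) : ℚ) / (a2 : ℚ)
        + (γ : ℚ) * ((q * s3 : ℕ) : ℚ) / (a3 : ℚ)))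
      = ((1 / (((a1 + q * s1 : ℕ)) : ℚ) ^ α) * (1 / (((a2 + q * s2 : ℕ)) : ℚ) ^ β)
          * (1 / (((a3 + q * s3 : ℕ)) : ℚ) ^ γ)
        - ((a1 : ℚ) - (α : ℚ) * (((q * s1 : ℕ) : ℤ) : ℚ)) / (a1 : ℚ) ^ (α + 1)
          * (((a2 : ℚ) - (β : ℚ) * (((q * s2 : ℕ) : ℤ) : ℚ)) / (a2 : ℚ) ^ (β + 1))
          * (((a3 : ℚ) - (γ : ℚ) * (((q * s3 : ℕ) : ℤ) : ℚ)) / (a3 : ℚ) ^ (γ + 1)))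
      + (((a1 : ℚ) - (α : ℚ) * (((q * s1 : ℕ) : ℤ) : ℚ)) / (a1 : ℚ) ^ (α + 1)
          * (((a2 : ℚ) - (β : ℚ) * (((q * s2 : ℕ) : ℤ) : ℚ)) / (a2 : ℚ) ^ (β + 1))
          * (((a3 : ℚ) - (γ : ℚ) * (((q * s3 : ℕ) : ℤ) : ℚ)) / (a3 : ℚ) ^ (γ + 1))
        - 1 / ((a1 : ℚ) ^ α * (a2 : ℚ) ^ β * (a3 : ℚ) ^ γ)
          * (1 - ((α : ℚ) * (((q * s1 : ℕ) : ℤ) : ℚ) / (a1 : ℚ)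
            + (β : ℚ) * (((q * s2 : ℕ) : ℤ) : ℚ) / (a2 : ℚ)
            + (γ : ℚ) * (((q * s3 : ℕ) : ℤ) : ℚ) / (a3 : ℚ)))) := by
    rw [Ff_split, Ff_split]
    push_cast
    ring
  rw [efinal]
  exact norm_add_le td tm

lemma inv_neg_pow (X : ℚ) (c : ℕ) : 1 / (-X) ^ c = (-1) ^ c * (1 / X ^ c) := by
  rcases Nat.even_or_odd c with h | h
  · rw [h.neg_pow, h.neg_one_pow, one_mul]
  · rw [h.neg_pow, h.neg_one_pow, div_neg, neg_one_mul]

lemma flip_est (α β γ q : ℕ) (hodd : Odd (α + β + γ)) (hq : p ∣ q)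
    {δ : ℚ} (hδ : padicNorm p (q : ℚ) ≤ δ) (hδ1 : δ ≤ 1)
    (u1 u2 u3 : ℕ) (h1 : 0 < u1) (h1q : u1 ≤ q) (hd1 : ¬ p ∣ u1)
    (h2 : 0 < u2) (h2q : u2 ≤ q) (hd2 : ¬ p ∣ u2)
    (h3 : 0 < u3) (h3q : u3 ≤ q) (hd3 : ¬ p ∣ u3) :
    padicNorm p (Ff α β γ (q - u1, q - u2, q - u3) + Ff α β γ (u1, u2, u3)
      + (q : ℚ) * (Ff α β γ (u1, u2, u3)
          * ((α : ℚ) / (u1 : ℚ) + (β : ℚ) / (u2 : ℚ) + (γ : ℚ) / (u3 : ℚ)))) ≤ δ ^ 2 := by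
  have hδ0 : 0 ≤ δ := le_trans (padicNorm.nonneg _) hδ
  have hvd : ∀ u : ℕ, u ≤ q → ¬ p ∣ u → ¬ p ∣ (q - u) := by
    intro u huq hdu hdv
    exact hdu (by have := Nat.dvd_sub hq hdv; rwa [show q - (q - u) = u by omega] at this)
  have hint : ∀ u : ℕ, ¬ p ∣ u → ¬ (p : ℤ) ∣ ((u : ℤ) + (-(q : ℤ))) := by
    intro u hdu hdvd
    apply hdu
    have h2 : (p : ℤ) ∣ (u : ℤ) := by
      have : (p : ℤ) ∣ (q : ℤ) := Int.natCast_dvd_natCast.2 hq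
      have := dvd_add hdvd this
      simpa using this
    exact_mod_cast h2
  have hnq : padicNorm p (((-(q : ℤ)) : ℤ) : ℚ) ≤ δ := by
    rw [show ((((-(q : ℤ)) : ℤ)) : ℚ) = -(q : ℚ) by push_cast; ring, padicNorm.neg]
    exact hδ
  -- coordinate estimates
  have hco : ∀ (c u : ℕ), 0 < u → u ≤ q → ¬ p ∣ u →
      padicNorm p (1 / (((q - u : ℕ)) : ℚ) ^ c
        - (-1 : ℚ) ^ c * (((u : ℚ) - (c : ℚ) * (((-(q : ℤ)) : ℤ) : ℚ)) / (u : ℚ) ^ (c + 1)))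
        ≤ δ ^ 2 := by
    intro c u hu huq hdu
    have h := expand_inv c u hdu (-(q : ℤ)) (hint u hdu)
    have hc : (((q - u : ℕ)) : ℚ) = -((u : ℚ) + (((-(q : ℤ)) : ℤ) : ℚ)) := by
      push_cast [Nat.cast_sub huq]
      ring
    have e : 1 / (((q - u : ℕ)) : ℚ) ^ c
        - (-1 : ℚ) ^ c * (((u : ℚ) - (c : ℚ) * (((-(q : ℤ)) : ℤ) : ℚ)) / (u : ℚ) ^ (c + 1))
        = (-1 : ℚ) ^ c * (1 / ((u : ℚ) + (((-(q : ℤ)) : ℤ) : ℚ)) ^ c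
          - ((u : ℚ) - (c : ℚ) * (((-(q : ℤ)) : ℤ) : ℚ)) / (u : ℚ) ^ (c + 1)) := by
      rw [hc, inv_neg_pow]
      ring
    rw [e, norm_neg_one_pow_mul]
    calc padicNorm p _ ≤ padicNorm p ((((-(q : ℤ)) : ℤ)) : ℚ) ^ 2 := h
      _ ≤ δ ^ 2 := by gcongr <;> first | exact padicNorm.nonneg _ | exact hnq
  have tm := triple_model (p := p) (c1 := α) (c2 := β) (c3 := γ) hd1 hd2 hd3
    (-(q : ℤ)) (-(q : ℤ)) (-(q : ℤ)) hδ1 hnq hnq hnq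
  -- triple difference
  have td : padicNorm p ((1 / (((q - u1 : ℕ)) : ℚ) ^ α) * (1 / (((q - u2 : ℕ)) : ℚ) ^ β)
        * (1 / (((q - u3 : ℕ)) : ℚ) ^ γ)
      - ((-1 : ℚ) ^ α * (((u1 : ℚ) - (α : ℚ) * (((-(q : ℤ)) : ℤ) : ℚ)) / (u1 : ℚ) ^ (α + 1)))
        * ((-1 : ℚ) ^ β * (((u2 : ℚ) - (β : ℚ) * (((-(q : ℤ)) : ℤ) : ℚ)) / (u2 : ℚ) ^ (β + 1)))
        * ((-1 : ℚ) ^ γ * (((u3 : ℚ) - (γ : ℚ) * (((-(q : ℤ)) : ℤ) : ℚ)) / (u3 : ℚ) ^ (γ + 1))))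
      ≤ δ ^ 2 := by
    apply triple_diff
      (norm_inv_unit_pow (hvd u2 h2q hd2)).le (norm_inv_unit_pow (hvd u3 h3q hd3)).le
      (by rw [norm_neg_one_pow_mul]; exact norm_y_le_one hd1 _)
      (by rw [norm_neg_one_pow_mul]; exact norm_y_le_one hd2 _)
      (hco α u1 h1 h1q hd1) (hco β u2 h2 h2q hd2) (hco γ u3 h3 h3q hd3)
  have hsign : (-1 : ℚ) ^ α * (-1 : ℚ) ^ β * (-1 : ℚ) ^ γ = -1 := by
    rw [← pow_add, ← pow_add]
    exact hodd.neg_one_pow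
  have keyA : ((-1 : ℚ) ^ α * (((u1 : ℚ) - (α : ℚ) * (((-(q : ℤ)) : ℤ) : ℚ)) / (u1 : ℚ) ^ (α + 1)))
        * ((-1 : ℚ) ^ β * (((u2 : ℚ) - (β : ℚ) * (((-(q : ℤ)) : ℤ) : ℚ)) / (u2 : ℚ) ^ (β + 1)))
        * ((-1 : ℚ) ^ γ * (((u3 : ℚ) - (γ : ℚ) * (((-(q : ℤ)) : ℤ) : ℚ)) / (u3 : ℚ) ^ (γ + 1)))
      = -((((u1 : ℚ) - (α : ℚ) * (((-(q : ℤ)) : ℤ) : ℚ)) / (u1 : ℚ) ^ (α + 1))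
          * ((((u2 : ℚ) - (β : ℚ) * (((-(q : ℤ)) : ℤ) : ℚ)) / (u2 : ℚ) ^ (β + 1)))
          * ((((u3 : ℚ) - (γ : ℚ) * (((-(q : ℤ)) : ℤ) : ℚ)) / (u3 : ℚ) ^ (γ + 1)))) := by
    linear_combination (((u1 : ℚ) - (α : ℚ) * (((-(q : ℤ)) : ℤ) : ℚ)) / (u1 : ℚ) ^ (α + 1))
      * ((((u2 : ℚ) - (β : ℚ) * (((-(q : ℤ)) : ℤ) : ℚ)) / (u2 : ℚ) ^ (β + 1)))
      * ((((u3 : ℚ) - (γ : ℚ) * (((-(q : ℤ)) : ℤ) : ℚ)) / (u3 : ℚ) ^ (γ + 1))) * hsign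
  have keyB : 1 / ((u1 : ℚ) ^ α * (u2 : ℚ) ^ β * (u3 : ℚ) ^ γ)
          * (1 - ((α : ℚ) * (((-(q : ℤ)) : ℤ) : ℚ) / (u1 : ℚ)
            + (β : ℚ) * (((-(q : ℤ)) : ℤ) : ℚ) / (u2 : ℚ)
            + (γ : ℚ) * (((-(q : ℤ)) : ℤ) : ℚ) / (u3 : ℚ)))
      = Ff α β γ (u1, u2, u3) + Ff α β γ (u1, u2, u3)
          * ((α : ℚ) / (u1 : ℚ) + (β : ℚ) / (u2 : ℚ) + (γ : ℚ) / (u3 : ℚ)) * (q : ℚ) := by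
    unfold Ff
    push_cast
    field_simp
    ring
  have key : Ff α β γ (q - u1, q - u2, q - u3) + Ff α β γ (u1, u2, u3)
      + (q : ℚ) * (Ff α β γ (u1, u2, u3)
          * ((α : ℚ) / (u1 : ℚ) + (β : ℚ) / (u2 : ℚ) + (γ : ℚ) / (u3 : ℚ)))
      = ((1 / (((q - u1 : ℕ)) : ℚ) ^ α) * (1 / (((q - u2 : ℕ)) : ℚ) ^ β)
          * (1 / (((q - u3 : ℕ)) : ℚ) ^ γ)
        - ((-1 : ℚ) ^ α * (((u1 : ℚ) - (α : ℚ) * (((-(q : ℤ)) : ℤ) : ℚ)) / (u1 : ℚ) ^ (α + 1)))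
          * ((-1 : ℚ) ^ β * (((u2 : ℚ) - (β : ℚ) * (((-(q : ℤ)) : ℤ) : ℚ)) / (u2 : ℚ) ^ (β + 1)))
          * ((-1 : ℚ) ^ γ * (((u3 : ℚ) - (γ : ℚ) * (((-(q : ℤ)) : ℤ) : ℚ)) / (u3 : ℚ) ^ (γ + 1))))
      - (((u1 : ℚ) - (α : ℚ) * (((-(q : ℤ)) : ℤ) : ℚ)) / (u1 : ℚ) ^ (α + 1)
          * (((u2 : ℚ) - (β : ℚ) * (((-(q : ℤ)) : ℤ) : ℚ)) / (u2 : ℚ) ^ (β + 1))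
          * (((u3 : ℚ) - (γ : ℚ) * (((-(q : ℤ)) : ℤ) : ℚ)) / (u3 : ℚ) ^ (γ + 1))
        - 1 / ((u1 : ℚ) ^ α * (u2 : ℚ) ^ β * (u3 : ℚ) ^ γ)
          * (1 - ((α : ℚ) * (((-(q : ℤ)) : ℤ) : ℚ) / (u1 : ℚ)
            + (β : ℚ) * (((-(q : ℤ)) : ℤ) : ℚ) / (u2 : ℚ)
            + (γ : ℚ) * (((-(q : ℤ)) : ℤ) : ℚ) / (u3 : ℚ)))) := by
    rw [keyA, keyB, Ff_split α β γ (q - u1, q - u2, q - u3)]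
    ring
  rw [key]
  exact norm_sub_le td tm

/-! ### model summand and summation over T -/

def Mdl (α β γ q : ℕ) (x : (ℕ × ℕ × ℕ) × (ℕ × ℕ × ℕ)) : ℚ :=
  Ff α β γ x.1 * (1 - ((α : ℚ) * ((q * x.2.1 : ℕ) : ℚ) / (x.1.1 : ℚ)
    + (β : ℚ) * ((q * x.2.2.1 : ℕ) : ℚ) / (x.1.2.1 : ℚ)
    + (γ : ℚ) * ((q * x.2.2.2 : ℕ) : ℚ) / (x.1.2.2 : ℚ)))

lemma sumT (α β γ q m : ℕ) (a : ℕ × ℕ × ℕ) :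
    ∑ s ∈ T p m, Mdl α β γ q (a, s)
      = ((T p m).card : ℚ) * Ff α β γ a
        - (q : ℚ) * (Ff α β γ a * ((α : ℚ) * ((∑ s ∈ T p m, s.1 : ℕ) : ℚ) / (a.1 : ℚ)
          + (β : ℚ) * ((∑ s ∈ T p m, s.2.1 : ℕ) : ℚ) / (a.2.1 : ℚ)
          + (γ : ℚ) * ((∑ s ∈ T p m, s.2.2 : ℕ) : ℚ) / (a.2.2 : ℚ))) := by
  have e : ∀ s : ℕ × ℕ × ℕ, Mdl α β γ q (a, s)
      = Ff α β γ a - ((q : ℚ) * (Ff α β γ a * (α : ℚ) / (a.1 : ℚ)) * (s.1 : ℚ)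
        + ((q : ℚ) * (Ff α β γ a * (β : ℚ) / (a.2.1 : ℚ)) * (s.2.1 : ℚ)
        + (q : ℚ) * (Ff α β γ a * (γ : ℚ) / (a.2.2 : ℚ)) * (s.2.2 : ℚ))) := by
    intro s
    unfold Mdl
    push_cast
    ring
  rw [Finset.sum_congr rfl (fun s _ => e s), Finset.sum_sub_distrib, Finset.sum_const,
    Finset.sum_add_distrib, Finset.sum_add_distrib, ← Finset.mul_sum, ← Finset.mul_sum,
    ← Finset.mul_sum]
  rw [show (∑ s ∈ T p m, ((s.1 : ℚ))) = ((∑ s ∈ T p m, s.1 : ℕ) : ℚ) from (Nat.cast_sum _ _).symm,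
    show (∑ s ∈ T p m, ((s.2.1 : ℚ))) = ((∑ s ∈ T p m, s.2.1 : ℕ) : ℚ) from
      (Nat.cast_sum _ _).symm,
    show (∑ s ∈ T p m, ((s.2.2 : ℚ))) = ((∑ s ∈ T p m, s.2.2 : ℕ) : ℚ) from
      (Nat.cast_sum _ _).symm, nsmul_eq_mul]
  ring

/-! ### flip bijection on A -/

lemma sumA2 (q : ℕ) (hpq : p ∣ q) (g : ℕ × ℕ × ℕ → ℚ) :
    ∑ a ∈ A p q 2, g a = ∑ a ∈ A p q 1, g (q - a.1, q - a.2.1, q - a.2.2) := by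
  have hflip : ∀ u : ℕ, u ≤ q → ¬ p ∣ u → ¬ p ∣ (q - u) := by
    intro u huq hdu hdv
    exact hdu (by have := Nat.dvd_sub hpq hdv; rwa [show q - (q - u) = u by omega] at this)
  have hlt : ∀ u : ℕ, u ≤ q → ¬ p ∣ u → u < q := by
    intro u huq hdu
    rcases Nat.lt_or_ge u q with h | h
    · exact h
    · exact absurd (by rw [show u = q by omega]; exact hpq) hdu
  apply Finset.sum_nbij' (i := fun a : ℕ × ℕ × ℕ => (q - a.1, q - a.2.1, q - a.2.2))
    (j := fun a : ℕ × ℕ × ℕ => (q - a.1, q - a.2.1, q - a.2.2))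
  · rintro ⟨a1, a2, a3⟩ ha
    simp only [A, mem_filter, mem_product, mem_range] at ha ⊢
    obtain ⟨⟨hb1, hb2, hb3⟩, hsum, h11, h12, h21, h22, h31, h32⟩ := ha
    have l1 := hlt a1 (by omega) h12
    have l2 := hlt a2 (by omega) h22
    have l3 := hlt a3 (by omega) h32
    exact ⟨⟨by omega, by omega, by omega⟩, by omega, by omega, hflip a1 (by omega) h12,
      by omega, hflip a2 (by omega) h22, by omega, hflip a3 (by omega) h32⟩
  · rintro ⟨a1, a2, a3⟩ ha
    simp only [A, mem_filter, mem_product, mem_range] at ha ⊢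
    obtain ⟨⟨hb1, hb2, hb3⟩, hsum, h11, h12, h21, h22, h31, h32⟩ := ha
    have l1 := hlt a1 (by omega) h12
    have l2 := hlt a2 (by omega) h22
    have l3 := hlt a3 (by omega) h32
    exact ⟨⟨by omega, by omega, by omega⟩, by omega, by omega, hflip a1 (by omega) h12,
      by omega, hflip a2 (by omega) h22, by omega, hflip a3 (by omega) h32⟩
  · rintro ⟨a1, a2, a3⟩ ha
    simp only [A, mem_filter, mem_product, mem_range] at ha
    obtain ⟨⟨hb1, hb2, hb3⟩, hsum, h11, h12, h21, h22, h31, h32⟩ := ha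
    simp only [Prod.mk.injEq]
    refine ⟨by omega, by omega, by omega⟩
  · rintro ⟨a1, a2, a3⟩ ha
    simp only [A, mem_filter, mem_product, mem_range] at ha
    obtain ⟨⟨hb1, hb2, hb3⟩, hsum, h11, h12, h21, h22, h31, h32⟩ := ha
    simp only [Prod.mk.injEq]
    refine ⟨by omega, by omega, by omega⟩
  · rintro ⟨a1, a2, a3⟩ ha
    simp only [A, mem_filter, mem_product, mem_range] at ha
    obtain ⟨⟨hb1, hb2, hb3⟩, hsum, h11, h12, h21, h22, h31, h32⟩ := ha
    congr 1
    simp only [Prod.mk.injEq]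
    refine ⟨by omega, by omega, by omega⟩

/-! ### key step: `Z_{p^{r+1}} ≡ p Z_{p^r} (mod p^{r+1})` -/

lemma key_step (α β γ : ℕ) (hα : 0 < α) (hβ : 0 < β) (hγ : 0 < γ)
    (hw : p > α + β + γ) (hodd : Odd (α + β + γ)) (r : ℕ) (hr : 1 ≤ r) :
    padicNorm p ((∑ k ∈ S p (p * p ^ r), Ff α β γ k)
      - (p : ℚ) * ∑ k ∈ S p (p ^ r), Ff α β γ k) ≤ (p : ℚ) ^ (-((r : ℤ) + 1)) := by
  have hp3 : 3 < p := by omega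
  have hp2 : 2 ≤ p := by omega
  set q := p ^ r with hqdef
  have hpq : p ∣ q := dvd_pow_self p (by omega)
  have hq2 : 2 ≤ q := le_trans hp2 (Nat.le_self_pow (by omega) p)
  set δ : ℚ := (p : ℚ) ^ (-(r : ℤ)) with hδdef
  set ε : ℚ := (p : ℚ) ^ (-((r : ℤ) + 1)) with hεdef
  have hpQ0 : (p : ℚ) ≠ 0 := by
    exact_mod_cast Nat.cast_ne_zero.2 (show p ≠ 0 by omega)
  have hδq : padicNorm p (q : ℚ) = δ := by
    rw [hqdef, hδdef, show ((p ^ r : ℕ) : ℚ) = (p : ℚ) ^ r by push_cast; ring]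
    exact norm_q r
  have hδ1 : δ ≤ 1 := zpow_neg_le_one r
  have hδ0 : 0 ≤ δ := by rw [hδdef]; positivity
  have hε0 : 0 ≤ ε := by rw [hεdef]; positivity
  have hδ2ε : δ ^ 2 ≤ ε := by
    rw [hδdef, hεdef, pow_two, ← zpow_add₀ hpQ0]
    rw [show (-(r : ℤ)) + (-(r : ℤ)) = -((r : ℤ) + r) by ring]
    exact zpow_neg_le (by omega)
  have hδp : δ * (p : ℚ) ^ (-(1 : ℤ)) = ε := by
    rw [hδdef, hεdef, ← zpow_add₀ hpQ0]
    congr 1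
    ring
  have hδ2δ : δ ^ 2 ≤ δ := by
    calc δ ^ 2 = δ * δ := by ring
      _ ≤ 1 * δ := by gcongr
      _ = δ := by ring
  -- dividing facts
  have hndk : ∀ u s : ℕ, ¬ p ∣ u → ¬ p ∣ (u + q * s) := by
    intro u s hnd hdvd
    exact hnd ((Nat.dvd_add_iff_left (Dvd.dvd.mul_right hpq s)).2 hdvd)
  -- norms of σ and card
  have hσ1 : ∀ m : ℕ, 1 ≤ m → m ≤ 2 →
      padicNorm p (((∑ s ∈ T p m, s.1 : ℕ)) : ℚ) ≤ (p : ℚ) ^ (-(1 : ℤ)) :=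
    fun m h1 h2 => norm_nat_dvd_le (dvd_sigma hp.out hp3 m h1 h2).1
  have hσ2 : ∀ m : ℕ, 1 ≤ m → m ≤ 2 →
      padicNorm p (((∑ s ∈ T p m, s.2.1 : ℕ)) : ℚ) ≤ (p : ℚ) ^ (-(1 : ℤ)) :=
    fun m h1 h2 => norm_nat_dvd_le (dvd_sigma hp.out hp3 m h1 h2).2.1
  have hσ3 : ∀ m : ℕ, 1 ≤ m → m ≤ 2 →
      padicNorm p (((∑ s ∈ T p m, s.2.2 : ℕ)) : ℚ) ≤ (p : ℚ) ^ (-(1 : ℤ)) :=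
    fun m h1 h2 => norm_nat_dvd_le (dvd_sigma hp.out hp3 m h1 h2).2.2
  have hc2 : padicNorm p (((T p 2).card : ℕ) : ℚ) ≤ (p : ℚ) ^ (-(1 : ℤ)) :=
    norm_nat_dvd_le (dvd_cardT hp.out hp3 2 (by omega) (by omega))
  -- R-term pointwise bound
  have hterm : ∀ (c u σ : ℕ), ¬ p ∣ u → padicNorm p ((σ : ℚ)) ≤ (p : ℚ) ^ (-(1 : ℤ)) →
      padicNorm p ((c : ℚ) * (σ : ℚ) / (u : ℚ)) ≤ (p : ℚ) ^ (-(1 : ℤ)) := by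
    intro c u σ hnd hσ
    rw [padicNorm.div, padicNorm.mul, norm_nat_unit hnd, div_one]
    calc padicNorm p (c : ℚ) * padicNorm p (σ : ℚ) ≤ 1 * ((p : ℚ) ^ (-(1 : ℤ))) := by
          gcongr <;> first | exact padicNorm.nonneg _ | exact padicNorm.of_nat _ | exact hσ
      _ = (p : ℚ) ^ (-(1 : ℤ)) := by ring
  have hRa : ∀ m : ℕ, 1 ≤ m → m ≤ 2 → ∀ a ∈ A p q m,
      padicNorm p (Ff α β γ a * ((α : ℚ) * ((∑ s ∈ T p m, s.1 : ℕ) : ℚ) / (a.1 : ℚ)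
        + (β : ℚ) * ((∑ s ∈ T p m, s.2.1 : ℕ) : ℚ) / (a.2.1 : ℚ)
        + (γ : ℚ) * ((∑ s ∈ T p m, s.2.2 : ℕ) : ℚ) / (a.2.2 : ℚ)))
        ≤ (p : ℚ) ^ (-(1 : ℤ)) := by
    intro m h1 h2 a ha
    simp only [A, mem_filter, mem_product, mem_range] at ha
    obtain ⟨-, -, -, hd1, -, hd2, -, hd3⟩ := ha
    rw [padicNorm.mul, norm_Ff hd1 hd2 hd3, one_mul]
    exact norm_add_le (norm_add_le (hterm α a.1 _ hd1 (hσ1 m h1 h2))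
      (hterm β a.2.1 _ hd2 (hσ2 m h1 h2))) (hterm γ a.2.2 _ hd3 (hσ3 m h1 h2))
  have hRm : ∀ m : ℕ, 1 ≤ m → m ≤ 2 →
      padicNorm p ((q : ℚ) * ∑ a ∈ A p q m,
        (Ff α β γ a * ((α : ℚ) * ((∑ s ∈ T p m, s.1 : ℕ) : ℚ) / (a.1 : ℚ)
          + (β : ℚ) * ((∑ s ∈ T p m, s.2.1 : ℕ) : ℚ) / (a.2.1 : ℚ)
          + (γ : ℚ) * ((∑ s ∈ T p m, s.2.2 : ℕ) : ℚ) / (a.2.2 : ℚ)))) ≤ ε := by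
    intro m h1 h2
    rw [padicNorm.mul, hδq, ← hδp]
    gcongr <;> first
      | exact padicNorm.nonneg _
      | exact padicNorm.sum_le' (hRa m h1 h2) (by positivity)
  -- E-term bounds
  have hE0 : ∀ m : ℕ, 1 ≤ m → m ≤ 2 →
      padicNorm p (∑ x ∈ A p q m ×ˢ T p m,
        (Ff α β γ (φm q x) - Mdl α β γ q x)) ≤ ε := by
    intro m h1 h2
    apply padicNorm.sum_le' _ hε0
    rintro ⟨⟨a1, a2, a3⟩, s1, s2, s3⟩ hx
    simp only [Finset.mem_product, A, T, mem_filter, mem_product, mem_range] at hx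
    obtain ⟨⟨-, -, -, hd1, -, hd2, -, hd3⟩, -⟩ := hx
    have := stepA α β γ q hpq hδq.le hδ1 a1 a2 a3 s1 s2 s3 hd1 hd2 hd3
      (hndk a1 s1 hd1) (hndk a2 s2 hd2) (hndk a3 s3 hd3)
    simp only [φm, Mdl]
    exact le_trans this hδ2ε
  -- sum over the model
  have hMdlm : ∀ m : ℕ, ∑ x ∈ A p q m ×ˢ T p m, Mdl α β γ q x
      = ((T p m).card : ℚ) * (∑ a ∈ A p q m, Ff α β γ a)
        - (q : ℚ) * ∑ a ∈ A p q m,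
          (Ff α β γ a * ((α : ℚ) * ((∑ s ∈ T p m, s.1 : ℕ) : ℚ) / (a.1 : ℚ)
            + (β : ℚ) * ((∑ s ∈ T p m, s.2.1 : ℕ) : ℚ) / (a.2.1 : ℚ)
            + (γ : ℚ) * ((∑ s ∈ T p m, s.2.2 : ℕ) : ℚ) / (a.2.2 : ℚ))) := by
    intro m
    rw [Finset.sum_product, Finset.sum_congr rfl (fun a _ => sumT α β γ q m a),
      Finset.sum_sub_distrib, ← Finset.mul_sum, ← Finset.mul_sum]
  -- W bound
  have hGa : ∀ a ∈ A p q 1, padicNorm p (Ff α β γ a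
      * ((α : ℚ) / (a.1 : ℚ) + (β : ℚ) / (a.2.1 : ℚ) + (γ : ℚ) / (a.2.2 : ℚ))) ≤ 1 := by
    intro a ha
    simp only [A, mem_filter, mem_product, mem_range] at ha
    obtain ⟨-, -, -, hd1, -, hd2, -, hd3⟩ := ha
    rw [padicNorm.mul, norm_Ff hd1 hd2 hd3, one_mul]
    have ht : ∀ (c u : ℕ), ¬ p ∣ u → padicNorm p ((c : ℚ) / (u : ℚ)) ≤ 1 := by
      intro c u hnd
      rw [padicNorm.div, norm_nat_unit hnd, div_one]
      exact padicNorm.of_nat _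
    exact norm_add_le (norm_add_le (ht α a.1 hd1) (ht β a.2.1 hd2)) (ht γ a.2.2 hd3)
  have hflipest : ∀ a ∈ A p q 1,
      padicNorm p (Ff α β γ (q - a.1, q - a.2.1, q - a.2.2) + Ff α β γ (a.1, a.2.1, a.2.2)
        + (q : ℚ) * (Ff α β γ (a.1, a.2.1, a.2.2)
          * ((α : ℚ) / (a.1 : ℚ) + (β : ℚ) / (a.2.1 : ℚ) + (γ : ℚ) / (a.2.2 : ℚ)))) ≤ δ := by
    intro a ha
    simp only [A, mem_filter, mem_product, mem_range] at ha
    obtain ⟨⟨hb1, hb2, hb3⟩, -, h11, hd1, h21, hd2, h31, hd3⟩ := ha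
    exact le_trans (flip_est α β γ q hodd hpq hδq.le hδ1 a.1 a.2.1 a.2.2
      h11 (by omega) hd1 h21 (by omega) hd2 h31 (by omega) hd3) hδ2δ
  have hW : padicNorm p ((∑ a ∈ A p q 2, Ff α β γ a) + ∑ a ∈ A p q 1, Ff α β γ a) ≤ δ := by
    rw [sumA2 q hpq (Ff α β γ)]
    have hcomb : (∑ a ∈ A p q 1, Ff α β γ (q - a.1, q - a.2.1, q - a.2.2))
          + ∑ a ∈ A p q 1, Ff α β γ a
        = (∑ a ∈ A p q 1, (Ff α β γ (q - a.1, q - a.2.1, q - a.2.2)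
            + Ff α β γ (a.1, a.2.1, a.2.2)
            + (q : ℚ) * (Ff α β γ (a.1, a.2.1, a.2.2)
              * ((α : ℚ) / (a.1 : ℚ) + (β : ℚ) / (a.2.1 : ℚ) + (γ : ℚ) / (a.2.2 : ℚ)))))
          - (q : ℚ) * ∑ a ∈ A p q 1, (Ff α β γ (a.1, a.2.1, a.2.2)
              * ((α : ℚ) / (a.1 : ℚ) + (β : ℚ) / (a.2.1 : ℚ) + (γ : ℚ) / (a.2.2 : ℚ))) := by
      rw [Finset.sum_add_distrib, Finset.sum_add_distrib, ← Finset.mul_sum]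
      have : ∀ a : ℕ × ℕ × ℕ, Ff α β γ (a.1, a.2.1, a.2.2) = Ff α β γ a := by
        intro a; rfl
      simp only [this]
      ring
    rw [hcomb]
    apply norm_sub_le
    · exact padicNorm.sum_le' hflipest hδ0
    · rw [padicNorm.mul, hδq]
      calc δ * padicNorm p (∑ a ∈ A p q 1, (Ff α β γ (a.1, a.2.1, a.2.2)
            * ((α : ℚ) / (a.1 : ℚ) + (β : ℚ) / (a.2.1 : ℚ) + (γ : ℚ) / (a.2.2 : ℚ))))
          ≤ δ * 1 := by
            gcongr
            refine padicNorm.sum_le' (fun a ha => ?_) (by norm_num)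
            exact hGa a ha
        _ = δ := by ring
  -- card relation
  have hc12 : (T p 1).card = (T p 2).card + p := by
    have e1 := cardT (p := p) 1 (by omega) (by omega) (by omega)
    have e2 := cardT (p := p) 2 (by omega) (by omega) (by omega)
    rw [show p + 1 - 1 = p by omega, show p + 2 - 1 = p + 1 by omega] at e1
    rw [show p + 1 - 2 = p - 1 by omega, show p + 2 - 2 = p by omega] at e2
    have hmul1 : p * (p + 1) = p * p + p := by ring
    have hmul2 : (p - 1) * p = p * p - p := by rw [Nat.sub_mul, one_mul]
    have hle : p ≤ p * p := Nat.le_mul_of_pos_left p (by omega)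
    omega
  have hc12Q : ((T p 1).card : ℚ) = ((T p 2).card : ℚ) + (p : ℚ) := by
    exact_mod_cast congrArg (Nat.cast : ℕ → ℚ) hc12
  -- final assembly
  have h0 := decompose p q hq2 hp2 hpq (Ff α β γ)
  have hdisj : Disjoint (A p q 1 ×ˢ T p 1) (A p q 2 ×ˢ T p 2) := by
    rw [Finset.disjoint_left]
    rintro ⟨⟨a1, a2, a3⟩, s⟩ h1 h2
    simp only [Finset.mem_product, A, mem_filter, mem_product, mem_range] at h1 h2
    omega
  have hsplit : ∑ x ∈ (A p q 1 ×ˢ T p 1) ∪ (A p q 2 ×ˢ T p 2), Ff α β γ (φm q x)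
      = (∑ x ∈ A p q 1 ×ˢ T p 1, Ff α β γ (φm q x))
        + ∑ x ∈ A p q 2 ×ˢ T p 2, Ff α β γ (φm q x) := Finset.sum_union hdisj
  have hsumm : ∀ m : ℕ, ∑ x ∈ A p q m ×ˢ T p m, Ff α β γ (φm q x)
      = (∑ x ∈ A p q m ×ˢ T p m, (Ff α β γ (φm q x) - Mdl α β γ q x))
        + ∑ x ∈ A p q m ×ˢ T p m, Mdl α β γ q x := by
    intro m
    rw [Finset.sum_sub_distrib]
    ring
  have heq : (∑ k ∈ S p (p * p ^ r), Ff α β γ k) - (p : ℚ) * ∑ k ∈ S p (p ^ r), Ff α β γ k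
      = ((∑ x ∈ A p q 1 ×ˢ T p 1, (Ff α β γ (φm q x) - Mdl α β γ q x))
          + ∑ x ∈ A p q 2 ×ˢ T p 2, (Ff α β γ (φm q x) - Mdl α β γ q x))
        + ((((T p 2).card : ℕ) : ℚ) * ((∑ a ∈ A p q 2, Ff α β γ a) + ∑ a ∈ A p q 1, Ff α β γ a)
          - (((q : ℚ) * ∑ a ∈ A p q 1,
              (Ff α β γ a * ((α : ℚ) * ((∑ s ∈ T p 1, s.1 : ℕ) : ℚ) / (a.1 : ℚ)
                + (β : ℚ) * ((∑ s ∈ T p 1, s.2.1 : ℕ) : ℚ) / (a.2.1 : ℚ)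
                + (γ : ℚ) * ((∑ s ∈ T p 1, s.2.2 : ℕ) : ℚ) / (a.2.2 : ℚ))))
            + ((q : ℚ) * ∑ a ∈ A p q 2,
              (Ff α β γ a * ((α : ℚ) * ((∑ s ∈ T p 2, s.1 : ℕ) : ℚ) / (a.1 : ℚ)
                + (β : ℚ) * ((∑ s ∈ T p 2, s.2.1 : ℕ) : ℚ) / (a.2.1 : ℚ)
                + (γ : ℚ) * ((∑ s ∈ T p 2, s.2.2 : ℕ) : ℚ) / (a.2.2 : ℚ)))))) := by
    rw [← hqdef]
    rw [h0, hsplit, hsumm 1, hsumm 2, hMdlm 1, hMdlm 2, ← A1_eq p q, hc12Q]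
    push_cast
    ring
  rw [heq]
  exact norm_add_le (norm_add_le (hE0 1 (by omega) (by omega)) (hE0 2 (by omega) (by omega)))
    (norm_sub_le
      (by
        rw [padicNorm.mul, ← hδp, mul_comm δ ((p:ℚ) ^ (-(1:ℤ)))]
        gcongr <;> first | exact padicNorm.nonneg _ | exact hc2 | exact hW)
      (norm_add_le (hRm 1 (by omega) (by omega)) (hRm 2 (by omega) (by omega))))

end Stmt8

/-- `Z_N(α,β,γ) = ∑_{k1+k2+k3=N, p∤k1k2k3, ki>0} 1/(k1^α k2^β k3^γ)`. -/
def Z3 (p N α β γ : ℕ) : ℚ :=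
  ∑ k ∈ (Finset.range (N + 1) ×ˢ Finset.range (N + 1) ×ˢ
      Finset.range (N + 1)).filter
      (fun k : ℕ × ℕ × ℕ => k.1 + k.2.1 + k.2.2 = N ∧
        0 < k.1 ∧ ¬ p ∣ k.1 ∧ 0 < k.2.1 ∧ ¬ p ∣ k.2.1 ∧ 0 < k.2.2 ∧ ¬ p ∣ k.2.2),
    1 / ((k.1 : ℚ) ^ α * (k.2.1 : ℚ) ^ β * (k.2.2 : ℚ) ^ γ)

/-- If `p` is prime, `α+β+γ` is odd with `p > α+β+γ`, then for every `r ≥ 1`,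
`Z_{p^r}(α,β,γ) ≡ p^{r-1} Z_p(α,β,γ) (mod p^r)` as `p`-integral rationals. -/
theorem stmt_8 (p : ℕ) (hp : p.Prime) (α β γ : ℕ)
    (hα : 0 < α) (hβ : 0 < β) (hγ : 0 < γ)
    (hw : p > α + β + γ) (hodd : Odd (α + β + γ)) (r : ℕ) (hr : 1 ≤ r) :
    padicNorm p (Z3 p (p ^ r) α β γ - (p : ℚ) ^ (r - 1) * Z3 p p α β γ)
      ≤ (p : ℚ) ^ (-(r : ℤ)) := by
  haveI : Fact p.Prime := ⟨hp⟩
  have hZ : ∀ N, Z3 p N α β γ = ∑ k ∈ Stmt8.S p N, Stmt8.Ff α β γ k := fun N => rfl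
  induction r, hr using Nat.le_induction with
  | base =>
    rw [pow_one, show (1 : ℕ) - 1 = 0 from rfl, pow_zero, one_mul, sub_self, padicNorm.zero]
    positivity
  | succ r hr ih =>
    have key' : padicNorm p (Z3 p (p ^ (r + 1)) α β γ - (p : ℚ) * Z3 p (p ^ r) α β γ)
        ≤ (p : ℚ) ^ (-((r : ℤ) + 1)) := by
      rw [hZ _, hZ _, show p ^ (r + 1) = p * p ^ r from pow_succ' p r]
      exact Stmt8.key_step α β γ hα hβ hγ hw hodd r hr
    have h2 : padicNorm p ((p : ℚ) * (Z3 p (p ^ r) α β γ - (p : ℚ) ^ (r - 1) * Z3 p p α β γ))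
        ≤ (p : ℚ) ^ (-((r : ℤ) + 1)) := by
      rw [padicNorm.mul, padicNorm.padicNorm_p_of_prime,
        show ((p : ℚ))⁻¹ = (p : ℚ) ^ (-(1 : ℤ)) from (zpow_neg_one _).symm,
        show (-((r : ℤ) + 1)) = (-(1 : ℤ)) + (-(r : ℤ)) by ring,
        zpow_add₀ (show (p : ℚ) ≠ 0 from Nat.cast_ne_zero.2 hp.pos.ne')]
      gcongr <;> first | positivity | exact ih | exact padicNorm.nonneg _
    have heq : Z3 p (p ^ (r + 1)) α β γ - (p : ℚ) ^ (r + 1 - 1) * Z3 p p α β γ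
        = (Z3 p (p ^ (r + 1)) α β γ - (p : ℚ) * Z3 p (p ^ r) α β γ)
          + (p : ℚ) * (Z3 p (p ^ r) α β γ - (p : ℚ) ^ (r - 1) * Z3 p p α β γ) := by
      have hpow : (p : ℚ) * (p : ℚ) ^ (r - 1) = (p : ℚ) ^ (r + 1 - 1) := by
        rw [← pow_succ']
        congr 1
        omega
      linear_combination (Z3 p p α β γ) * hpow
    rw [heq, show ((((r : ℕ) + 1) : ℕ) : ℤ) = (r : ℤ) + 1 by push_cast; ring]
    exact Stmt8.norm_add_le key' h2
end
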